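/- arXiv:2403.04595 — 12 statements merged into one kernel-verified Lean document; each statement's English description precedes it below -/
import Mathlib

section
/- Let â ∈ ℝ and let y, z : ℝ → ℝ be twice differentiable functions satisfying the Wente ODE system with parameter â. Then the two functions u ↦ y'(u)² − z'(u)² − (â−1)·y(u)² + â·z(u)² + (y(u)²−z(u)²)² and u ↦ (z(u)y'(u) − y(u)z'(u))² + z'(u)² + z(u)²·(y(u)² − z(u)² − â) are constant on ℝ. -/
/-- The Wente ODE system with parameter `ahat`, for twice differentiable `y`, `z`:
`y'' = (ahat−1)y − 2y(y²−z²)`, `z'' = ahat·z − 2z(y²−z²)`. -/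
def WenteSystem (ahat : ℝ) (y z : ℝ → ℝ) : Prop :=
  (∀ u : ℝ, DifferentiableAt ℝ y u) ∧ (∀ u : ℝ, DifferentiableAt ℝ (deriv y) u) ∧
  (∀ u : ℝ, DifferentiableAt ℝ z u) ∧ (∀ u : ℝ, DifferentiableAt ℝ (deriv z) u) ∧
  (∀ u : ℝ, deriv (deriv y) u = (ahat - 1) * y u - 2 * y u * ((y u) ^ 2 - (z u) ^ 2)) ∧
  (∀ u : ℝ, deriv (deriv z) u = ahat * z u - 2 * z u * ((y u) ^ 2 - (z u) ^ 2))

/-! Both quantities are first integrals of the Wente system: differentiating either one along a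
solution and substituting the two equations for `y''` and `z''` gives an expression that vanishes
identically, so each has derivative zero on `ℝ` and is therefore constant. -/

lemma exists_forall_eq_of_hasDerivAt_zero {E : Type*} [NormedAddCommGroup E] [NormedSpace ℝ E]
    {f : ℝ → E} (hf : ∀ u, HasDerivAt f 0 u) :
    ∃ c, ∀ u, f u = c :=
  ⟨f 0, fun u => is_const_of_deriv_eq_zero (fun x => (hf x).differentiableAt)
    (fun x => (hf x).deriv) u 0⟩

namespace WenteSystem

variable {ahat : ℝ} {y z : ℝ → ℝ}

lemma hasDerivAt_deriv_fst (hsys : WenteSystem ahat y z) (u : ℝ) :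
    HasDerivAt (deriv y) ((ahat - 1) * y u - 2 * y u * ((y u) ^ 2 - (z u) ^ 2)) u :=
  hsys.2.2.2.2.1 u ▸ (hsys.2.1 u).hasDerivAt

lemma hasDerivAt_deriv_snd (hsys : WenteSystem ahat y z) (u : ℝ) :
    HasDerivAt (deriv z) (ahat * z u - 2 * z u * ((y u) ^ 2 - (z u) ^ 2)) u :=
  hsys.2.2.2.2.2 u ▸ (hsys.2.2.2.1 u).hasDerivAt

lemma hasDerivAt_hamiltonian (hsys : WenteSystem ahat y z) (u : ℝ) :
    HasDerivAt (fun v => (deriv y v) ^ 2 - (deriv z v) ^ 2 - (ahat - 1) * (y v) ^ 2 +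
      ahat * (z v) ^ 2 + ((y v) ^ 2 - (z v) ^ 2) ^ 2) 0 u := by
  have hY := (hsys.1 u).hasDerivAt
  have hZ := (hsys.2.2.1 u).hasDerivAt
  have hY' := hsys.hasDerivAt_deriv_fst u
  have hZ' := hsys.hasDerivAt_deriv_snd u
  refine ((((hY'.pow 2).sub (hZ'.pow 2)).sub ((hY.pow 2).const_mul (ahat - 1))).add
    ((hZ.pow 2).const_mul ahat) |>.add (((hY.pow 2).sub (hZ.pow 2)).pow 2)).congr_deriv ?_
  simp only [Pi.pow_apply, Pi.sub_apply]
  ring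

lemma hasDerivAt_secondIntegral (hsys : WenteSystem ahat y z) (u : ℝ) :
    HasDerivAt (fun v => (z v * deriv y v - y v * deriv z v) ^ 2 + (deriv z v) ^ 2 +
      (z v) ^ 2 * ((y v) ^ 2 - (z v) ^ 2 - ahat)) 0 u := by
  have hY := (hsys.1 u).hasDerivAt
  have hZ := (hsys.2.2.1 u).hasDerivAt
  have hY' := hsys.hasDerivAt_deriv_fst u
  have hZ' := hsys.hasDerivAt_deriv_snd u
  refine ((((hZ.mul hY').sub (hY.mul hZ')).pow 2).add (hZ'.pow 2) |>.add
    ((hZ.pow 2).mul (((hY.pow 2).sub (hZ.pow 2)).sub_const ahat))).congr_deriv ?_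
  simp only [Pi.pow_apply, Pi.sub_apply, Pi.mul_apply]
  ring

end WenteSystem

theorem wente_hamiltonian_constants (ahat : ℝ) (y z : ℝ → ℝ)
    (hsys : WenteSystem ahat y z) :
    (∃ h : ℝ, ∀ u : ℝ,
      (deriv y u) ^ 2 - (deriv z u) ^ 2 - (ahat - 1) * (y u) ^ 2 + ahat * (z u) ^ 2 +
        ((y u) ^ 2 - (z u) ^ 2) ^ 2 = h) ∧
    (∃ k : ℝ, ∀ u : ℝ,
      (z u * deriv y u - y u * deriv z u) ^ 2 + (deriv z u) ^ 2 +
        (z u) ^ 2 * ((y u) ^ 2 - (z u) ^ 2 - ahat) = k) :=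
  ⟨exists_forall_eq_of_hasDerivAt_zero hsys.hasDerivAt_hamiltonian,
    exists_forall_eq_of_hasDerivAt_zero hsys.hasDerivAt_secondIntegral⟩
end

section
/- Let a, b, c be real numbers with a ≥ 1, b ≥ a, c > 1, set 𝒜 = (a+1/a)/2, ℬ = (b+1/b)/2, 𝒞 = (c−1/c)/2, and assume 𝒞² ≤ (𝒜−ℬ)²/(4𝒜ℬ). Set â = 1 − 𝒜ℬ + 𝒞² and let y, z : ℝ → ℝ be twice differentiable functions satisfying the Wente ODE system with parameter â together with the initial conditions y(0) = z(0) = 0, y'(0) = (𝒜+ℬ)𝒞/2, z'(0) = (ℬ−𝒜)·√(𝒞²+1)/2. Then there exists ε > 0 such that y(u) < z(u) for every u ∈ (0,ε). -/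
open Filter Set Topology

section RightOfAPoint

variable {f : ℝ → ℝ} {x : ℝ}

lemma eventually_nhdsGT_lt_of_deriv_pos (hf : 0 < deriv f x) : ∀ᶠ u in 𝓝[>] x, f x < f u := by
  have hslope :=
    hasDerivAt_iff_tendsto_slope.mp (differentiableAt_of_deriv_ne_zero hf.ne').hasDerivAt
  filter_upwards [nhdsGT_le_nhdsNE x (hslope.eventually (eventually_gt_nhds hf)),
    self_mem_nhdsWithin] with u hpos (hxu : x < u)
  exact (slope_pos_iff_of_le hxu.le).mp hpos

lemma eventually_nhdsGT_lt_of_eventually_deriv_pos (hf : ContinuousAt f x)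
    (hderiv : ∀ᶠ u in 𝓝[>] x, 0 < deriv f u) : ∀ᶠ u in 𝓝[>] x, f x < f u := by
  obtain ⟨ε, hxε, hsub⟩ := mem_nhdsGT_iff_exists_Ioo_subset.mp hderiv
  have hcont : ContinuousOn f (Ico x ε) := by
    rintro u ⟨hxu, huε⟩
    rcases hxu.eq_or_lt with rfl | hxu
    · exact hf.continuousWithinAt
    · exact (differentiableAt_of_deriv_ne_zero (hsub ⟨hxu, huε⟩).ne').continuousAt
        |>.continuousWithinAt
  have hmono : StrictMonoOn f (Ico x ε) :=
    strictMonoOn_of_deriv_pos (convex_Ico x ε) hcont (by rw [interior_Ico]; exact hsub)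
  filter_upwards [Ioo_mem_nhdsGT hxε] with u hu
  exact hmono (left_mem_Ico.mpr hxε) (Ioo_subset_Ico_self hu) hu.1

lemma eventually_nhdsGT_lt_of_deriv_deriv_deriv_pos (hf : ContinuousAt f x)
    (hf' : ContinuousAt (deriv f) x) (hd : deriv f x = 0) (hdd : deriv (deriv f) x = 0)
    (hddd : 0 < deriv (deriv (deriv f)) x) : ∀ᶠ u in 𝓝[>] x, f x < f u := by
  have hdd_pos : ∀ᶠ u in 𝓝[>] x, 0 < deriv (deriv f) u :=
    (eventually_nhdsGT_lt_of_deriv_pos hddd).mono fun _ hu => hdd ▸ hu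
  have hd_pos : ∀ᶠ u in 𝓝[>] x, 0 < deriv f u :=
    (eventually_nhdsGT_lt_of_eventually_deriv_pos hf' hdd_pos).mono fun _ hu => hd ▸ hu
  exact eventually_nhdsGT_lt_of_eventually_deriv_pos hf hd_pos

end RightOfAPoint

lemma half_add_inv_le_half_add_inv {a b : ℝ} (ha : 1 ≤ a) (hab : a ≤ b) :
    (a + 1 / a) / 2 ≤ (b + 1 / b) / 2 := by
  have hb : 0 < b := by linarith
  have : 1 / a - 1 / b ≤ b - a := by
    rw [div_sub_div _ _ (by positivity) hb.ne', one_mul, mul_one]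
    exact div_le_self (by linarith) (by nlinarith)
  linarith

lemma half_sub_inv_pos {c : ℝ} (hc : 1 < c) : 0 < (c - 1 / c) / 2 := by
  have : 1 / c < c := by rw [div_lt_iff₀ (by linarith)]; nlinarith
  linarith

lemma add_mul_le_sub_mul_sqrt_sq_add_one {A B C : ℝ} (hA : 0 < A) (hAB : A ≤ B) (hC : 0 ≤ C)
    (h : C ^ 2 ≤ (A - B) ^ 2 / (4 * A * B)) : (A + B) * C ≤ (B - A) * √(C ^ 2 + 1) := by
  have hB : 0 < B := hA.trans_le hAB
  have h' : 4 * A * B * C ^ 2 ≤ (A - B) ^ 2 := by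
    rwa [le_div_iff₀ (by positivity), mul_comm] at h
  rw [← Real.sqrt_sq (by positivity : 0 ≤ (A + B) * C),
    ← Real.sqrt_sq (mul_nonneg (by linarith) (Real.sqrt_nonneg _) : 0 ≤ (B - A) * √(C ^ 2 + 1))]
  refine Real.sqrt_le_sqrt ?_
  rw [mul_pow (B - A), Real.sq_sqrt (by positivity)]
  nlinarith

namespace WenteSystem

variable {ahat : ℝ} {y z : ℝ → ℝ}

lemma deriv_sub_eq (h : WenteSystem ahat y z) :
    deriv (fun v => z v - y v) = fun v => deriv z v - deriv y v :=
  funext fun v => deriv_fun_sub (h.2.2.1 v) (h.1 v)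

lemma deriv_deriv_sub (h : WenteSystem ahat y z) (u : ℝ) :
    deriv (deriv fun v => z v - y v) u =
      ahat * (z u - y u) + y u - 2 * (z u - y u) * (y u ^ 2 - z u ^ 2) := by
  rw [h.deriv_sub_eq]
  obtain ⟨-, hy', -, hz', hy'', hz''⟩ := h
  rw [deriv_fun_sub (hz' u) (hy' u), hz'' u, hy'' u]
  ring

lemma hasDerivAt_deriv_deriv_sub_zero (h : WenteSystem ahat y z) (hy0 : y 0 = 0)
    (hz0 : z 0 = 0) :
    HasDerivAt (deriv (deriv fun v => z v - y v))
      (ahat * (deriv z 0 - deriv y 0) + deriv y 0) 0 := by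
  have hy := (h.1 0).hasDerivAt
  have hz := (h.2.2.1 0).hasDerivAt
  have hw := hz.fun_sub hy
  have hrhs := ((hw.const_mul ahat).fun_add hy).fun_sub
    ((hw.fun_mul ((hy.fun_pow 2).fun_sub (hz.fun_pow 2))).const_mul 2)
  rw [funext h.deriv_deriv_sub]
  simpa [hy0, hz0, mul_assoc] using hrhs

lemma eventually_nhdsGT_lt (h : WenteSystem ahat y z) (hy0 : y 0 = 0) (hz0 : z 0 = 0)
    (hyz : deriv y 0 ≤ deriv z 0) (hy' : 0 < deriv y 0) : ∀ᶠ u in 𝓝[>] 0, y u < z u := by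
  set w : ℝ → ℝ := fun v => z v - y v
  suffices ∀ᶠ u in 𝓝[>] 0, w 0 < w u by simpa [w, hy0, hz0] using this
  have hw' : deriv w 0 = deriv z 0 - deriv y 0 := congrFun h.deriv_sub_eq 0
  rcases hyz.eq_or_lt with hyz | hyz
  · have hw''' := h.hasDerivAt_deriv_deriv_sub_zero hy0 hz0
    rw [← hyz, sub_self, mul_zero, zero_add] at hw'''
    have hw'_cont : ContinuousAt (deriv w) 0 := by
      rw [h.deriv_sub_eq]
      exact ((h.2.2.2.1 0).sub (h.2.1 0)).continuousAt
    exact eventually_nhdsGT_lt_of_deriv_deriv_deriv_pos ((h.2.2.1 0).sub (h.1 0)).continuousAt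
      hw'_cont (by rw [hw', hyz, sub_self]) (by simp [w, h.deriv_deriv_sub, hy0, hz0])
      (hw'''.deriv ▸ hy')
  · exact eventually_nhdsGT_lt_of_deriv_pos (by rw [hw']; linarith)

end WenteSystem

theorem y_below_z_outside_free_boundary_region (a b c : ℝ)
    (ha : 1 ≤ a) (hba : a ≤ b) (hc : 1 < c)
    (A B C : ℝ) (hA : A = (a + 1/a)/2) (hB : B = (b + 1/b)/2) (hC : C = (c - 1/c)/2)
    (hW : C ^ 2 ≤ (A - B) ^ 2 / (4 * A * B))
    (y z : ℝ → ℝ)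
    (hsys : WenteSystem (1 - A * B + C ^ 2) y z)
    (hy0 : y 0 = 0) (hz0 : z 0 = 0)
    (hy'0 : deriv y 0 = (A + B) * C / 2)
    (hz'0 : deriv z 0 = (B - A) * Real.sqrt (C ^ 2 + 1) / 2) :
    ∃ ε : ℝ, 0 < ε ∧ ∀ u : ℝ, 0 < u → u < ε → y u < z u := by
  have hA0 : 0 < A := by
    have : 0 < a := by linarith
    rw [hA]; positivity
  have hAB : A ≤ B := hA ▸ hB ▸ half_add_inv_le_half_add_inv ha hba
  have hC0 : 0 < C := hC ▸ half_sub_inv_pos hc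
  have hyz : deriv y 0 ≤ deriv z 0 := by
    rw [hy'0, hz'0]
    linarith [add_mul_le_sub_mul_sqrt_sq_add_one hA0 hAB hC0.le hW]
  have hy' : 0 < deriv y 0 := by
    rw [hy'0]
    exact div_pos (mul_pos (by linarith) hC0) two_pos
  obtain ⟨ε, hε, hsub⟩ :=
    mem_nhdsGT_iff_exists_Ioo_subset.mp (hsys.eventually_nhdsGT_lt hy0 hz0 hyz hy')
  exact ⟨ε, hε, fun u hu hue => hsub ⟨hu, hue⟩⟩
end

section
/- Fix real numbers b ≥ 1 and c ≥ 1. For a > 1, let σ(a) = ∫ from 1/(ac) to a/c of 2/√(p_a(x)) dx, where p_a(x) = −(x − a/c)(x − 1/(ac))(x + bc)(x + c/b). Then σ(a) tends to 2πc/√(1 + (b + 1/b)c² + c⁴) as a tends to 1 from the right. -/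
open Real Filter Set MeasureTheory Topology

/-!
Substituting `x = (α + β) / 2 + (β - α) / 2 * cos θ` turns `∫_α^β f x / √((β - x) (x - α)) dx`
into `∫_0^π f (x(θ)) dθ`, an integral with a bounded integrand. As the two roots `α = 1/(ac)` and
`β = a/c` merge at `1/c`, dominated convergence gives the limit `π f(1/c)` with
`f x = 2 / √((x + bc) (x + c/b))`, and `c² (1/c + bc) (1/c + c/b) = 1 + (b + 1/b) c² + c⁴`.
-/

lemma midpoint_add_mul_cos_mem_segment (α β θ : ℝ) :
    (α + β) / 2 + (β - α) / 2 * cos θ ∈ segment ℝ α β :=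
  ⟨(1 - cos θ) / 2, (1 + cos θ) / 2, by linarith [cos_le_one θ], by linarith [neg_one_le_cos θ],
    by ring, by simp only [smul_eq_mul]; ring⟩

theorem integral_div_sqrt_sub_mul_sub_eq_integral_cos {α β : ℝ} (hαβ : α < β) (f : ℝ → ℝ) :
    ∫ x in α..β, f x / √((β - x) * (x - α)) =
      ∫ θ in 0..π, f ((α + β) / 2 + (β - α) / 2 * cos θ) := by
  set r := (β - α) / 2
  set m := (α + β) / 2
  have hr : 0 < r := by simp only [r]; linarith
  have hα : α = r * (-1) + m := by simp only [r, m]; ring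
  have hβ : β = r * 1 + m := by simp only [r, m]; ring
  have hweight : ∀ t : ℝ,
      r * (f (r * t + m) / √((β - (r * t + m)) * ((r * t + m) - α))) =
        f (m + r * t) * √(1 - t ^ 2)⁻¹ := by
    intro t
    have hroots : (β - (r * t + m)) * ((r * t + m) - α) = r ^ 2 * (1 - t ^ 2) := by
      rw [hα, hβ]; ring
    rw [hroots, sqrt_mul (sq_nonneg r), sqrt_sq hr.le, sqrt_inv, add_comm (r * t)]
    field_simp
  rw [← Polynomial.Chebyshev.integral_measureT_eq_integral_cos (f := fun y => f (m + r * y)),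
    Polynomial.Chebyshev.integral_measureT, ← funext hweight, intervalIntegral.integral_const_mul,
    ← smul_eq_mul,
    intervalIntegral.smul_integral_comp_mul_add (fun x => f x / √((β - x) * (x - α))), ← hα, ← hβ]

theorem tendsto_integral_div_sqrt_sub_mul_sub {ι : Type*} {l : Filter ι} [l.IsCountablyGenerated]
    {f : ℝ → ℝ} {x₀ : ℝ} {α β : ι → ℝ} (hf : Measurable f) (hfx₀ : ContinuousAt f x₀)
    (hα : Tendsto α l (𝓝 x₀)) (hβ : Tendsto β l (𝓝 x₀)) (hαβ : ∀ᶠ i in l, α i < β i) :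
    Tendsto (fun i => ∫ x in α i..β i, f x / √((β i - x) * (x - α i))) l (𝓝 (π * f x₀)) := by
  set x : ι → ℝ → ℝ := fun i θ => (α i + β i) / 2 + (β i - α i) / 2 * cos θ
  obtain ⟨ε, hε, hbound⟩ : ∃ ε > 0, ∀ y ∈ Metric.ball x₀ ε, ‖f y‖ ≤ ‖f x₀‖ + 1 :=
    Metric.mem_nhds_iff.1 (hfx₀.norm.eventually (gt_mem_nhds (lt_add_one ‖f x₀‖))) |>.imp
      fun _ ⟨hε, hsub⟩ => ⟨hε, fun y hy => (hsub hy).le⟩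
  have hx_ball : ∀ᶠ i in l, ∀ θ, x i θ ∈ Metric.ball x₀ ε := by
    filter_upwards [hα (Metric.ball_mem_nhds x₀ hε), hβ (Metric.ball_mem_nhds x₀ hε)]
      with i hαi hβi θ
    exact (convex_ball x₀ ε).segment_subset hαi hβi (midpoint_add_mul_cos_mem_segment _ _ θ)
  have hx_tendsto : ∀ θ, Tendsto (fun i => x i θ) l (𝓝 x₀) := by
    intro θ
    convert ((hα.add hβ).div_const 2).add (((hβ.sub hα).div_const 2).mul_const (cos θ)) using 2
    ring
  have hlim : Tendsto (fun i => ∫ θ in 0..π, f (x i θ)) l (𝓝 (∫ _ in 0..π, f x₀)) := by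
    refine intervalIntegral.tendsto_integral_filter_of_dominated_convergence (fun _ => ‖f x₀‖ + 1)
      (Eventually.of_forall fun i => (hf.comp (by fun_prop)).aestronglyMeasurable) ?_
      intervalIntegrable_const (ae_of_all _ fun θ _ => hfx₀.tendsto.comp (hx_tendsto θ))
    filter_upwards [hx_ball] with i hi
    exact ae_of_all _ fun θ _ => hbound _ (hi θ)
  rw [intervalIntegral.integral_const, smul_eq_mul, sub_zero] at hlim
  refine hlim.congr' ?_
  filter_upwards [hαβ] with i hi
  exact (integral_div_sqrt_sub_mul_sub_eq_integral_cos hi f).symm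

lemma one_div_mul_lt_div {a c : ℝ} (ha : 1 < a) (hc : 0 < c) : 1 / (a * c) < a / c := by
  rw [div_lt_div_iff₀ (by positivity) hc]
  nlinarith [mul_pos (mul_pos (sub_pos.2 ha) (by linarith : 0 < a + 1)) hc]

lemma sqrt_one_add_mul_sq_add_pow_four {b c : ℝ} (hb : 0 < b) (hc : 0 < c) :
    √(1 + (b + 1 / b) * c ^ 2 + c ^ 4) = c * √((1 / c + b * c) * (1 / c + c / b)) := by
  rw [← sqrt_sq hc.le, ← sqrt_mul (sq_nonneg c), sqrt_sq hc.le]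
  congr 1
  field_simp
  ring

theorem sigma_extends_to_a_eq_one (b c : ℝ) (hb : 1 ≤ b) (hc : 1 ≤ c) :
    Tendsto
      (fun a : ℝ =>
        ∫ x in (1/(a*c))..(a/c),
          2 / Real.sqrt (-(x - a/c) * (x - 1/(a*c)) * (x + b*c) * (x + c/b)))
      (nhdsWithin 1 (Set.Ioi 1))
      (nhds (2 * Real.pi * c / Real.sqrt (1 + (b + 1/b) * c^2 + c^4))) := by
  have hb0 : 0 < b := by linarith
  have hc0 : 0 < c := by linarith
  set f : ℝ → ℝ := fun x => 2 / √((x + b * c) * (x + c / b))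
  have hf_cont : ContinuousAt f (1 / c) :=
    continuousAt_const.div (by fun_prop) (sqrt_pos.2 (by positivity)).ne'
  have hα : Tendsto (fun a : ℝ => 1 / (a * c)) (𝓝[>] 1) (𝓝 (1 / c)) := by
    have hcont : ContinuousAt (fun a : ℝ => 1 / (a * c)) 1 := by fun_prop (disch := simp [hc0.ne'])
    simpa using hcont.tendsto.mono_left nhdsWithin_le_nhds
  have hβ : Tendsto (fun a : ℝ => a / c) (𝓝[>] 1) (𝓝 (1 / c)) :=
    (continuousAt_id.div_const c).tendsto.mono_left nhdsWithin_le_nhds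
  have hαβ : ∀ᶠ a in 𝓝[>] (1 : ℝ), 1 / (a * c) < a / c :=
    eventually_nhdsWithin_of_forall fun a ha => one_div_mul_lt_div ha hc0
  have hvalue : π * f (1 / c) = 2 * π * c / √(1 + (b + 1 / b) * c ^ 2 + c ^ 4) := by
    rw [sqrt_one_add_mul_sq_add_pow_four hb0 hc0]
    simp only [f]
    field_simp
  rw [← hvalue]
  refine (tendsto_integral_div_sqrt_sub_mul_sub (by fun_prop) hf_cont hα hβ hαβ).congr' ?_
  filter_upwards [hαβ] with a hαβa
  refine intervalIntegral.integral_congr fun x hx => ?_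
  rw [uIcc_of_le hαβa.le] at hx
  have hquartic : -(x - a / c) * (x - 1 / (a * c)) * (x + b * c) * (x + c / b) =
      ((a / c - x) * (x - 1 / (a * c))) * ((x + b * c) * (x + c / b)) := by ring
  simp only [f, hquartic, sqrt_mul (mul_nonneg (sub_nonneg.2 hx.2) (sub_nonneg.2 hx.1))]
  field_simp
end

section
/- Let H ≥ 0, μ = √(H²+1), and δ ∈ ℝ. Define h(x) = x² − x⁴ − (H·x² − δ)². Then there exists x ∈ ℝ with h(x) ≥ 0 if and only if (H−μ)/2 ≤ δ ≤ (H+μ)/2. -/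
theorem nonneg_range_of_h_spherical (H δ μ : ℝ) (hH : 0 ≤ H)
    (hμ : μ = Real.sqrt (H ^ 2 + 1)) :
    (∃ x : ℝ, 0 ≤ x ^ 2 - x ^ 4 - (H * x ^ 2 - δ) ^ 2) ↔
      ((H - μ) / 2 ≤ δ ∧ δ ≤ (H + μ) / 2) := by
  have hμ2 : μ ^ 2 = H ^ 2 + 1 := by
    rw [hμ]; exact Real.sq_sqrt (by positivity)
  have hμ0 : 0 ≤ μ := hμ ▸ Real.sqrt_nonneg _
  have hμpos : 0 < μ := by nlinarith [sq_nonneg H]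
  have hHμ : H < μ := by nlinarith
  constructor
  · rintro ⟨x, hx⟩
    rcases eq_or_lt_of_le (sq_nonneg x) with h0 | hpos
    · have hx2 : x ^ 2 = 0 := h0.symm
      have hx4 : x ^ 4 = 0 := by
        rw [show x ^ 4 = (x ^ 2) ^ 2 by ring, hx2]; simp
      have hδ2 : δ ^ 2 ≤ 0 := by
        rw [hx2, hx4] at hx; nlinarith [hx]
      have hδ : δ = 0 :=
        pow_eq_zero_iff two_ne_zero |>.mp (le_antisymm hδ2 (sq_nonneg δ))
      constructor <;> nlinarith
    · have key1 : 0 ≤ 1 + 2 * (H - μ) * δ := by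
        nlinarith [sq_nonneg (μ * x ^ 2 - δ), hpos, hx, hμ2]
      have key2 : 0 ≤ 1 + 2 * (H + μ) * δ := by
        nlinarith [sq_nonneg (μ * x ^ 2 + δ), hpos, hx, hμ2]
      constructor
      · nlinarith [mul_nonneg (by linarith : (0:ℝ) ≤ μ - H) key2]
      · nlinarith [mul_nonneg (by linarith : (0:ℝ) ≤ μ + H) key1]
  · rintro ⟨h1, h2⟩
    have key : 0 ≤ 1 + 4 * H * δ - 4 * δ ^ 2 := by
      nlinarith [mul_nonneg (by linarith : (0:ℝ) ≤ 2*δ - (H - μ))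
        (by linarith : (0:ℝ) ≤ (H + μ) - 2*δ)]
    have hnum : 0 ≤ 1 + 2 * H * δ := by nlinarith [sq_nonneg (2*δ - H)]
    set t : ℝ := (1 + 2 * H * δ) / (2 * (H ^ 2 + 1)) with ht
    have htn : 0 ≤ t := by positivity
    refine ⟨Real.sqrt t, ?_⟩
    rw [Real.sq_sqrt htn, show Real.sqrt t ^ 4 = (Real.sqrt t ^ 2) ^ 2 by ring,
      Real.sq_sqrt htn]
    have : t - t ^ 2 - (H * t - δ) ^ 2
        = (1 + 4 * H * δ - 4 * δ ^ 2) / (4 * (H ^ 2 + 1)) := by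
      rw [ht]; field_simp; ring
    rw [this]
    positivity
end

section
/- Let H > 1, μ = √(H²−1), and δ ∈ ℝ. Define h(x) = x² + x⁴ − (H·x² − δ)². Then there exists x ∈ ℝ with h(x) ≥ 0 if and only if δ ≥ (μ−H)/2. -/
theorem nonneg_range_of_h_hyperbolic (H δ μ : ℝ) (hH : 1 < H)
    (hμ : μ = Real.sqrt (H ^ 2 - 1)) :
    (∃ x : ℝ, 0 ≤ x ^ 2 + x ^ 4 - (H * x ^ 2 - δ) ^ 2) ↔ (μ - H) / 2 ≤ δ := by
  have h1 : (0:ℝ) < H ^ 2 - 1 := by nlinarith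
  have hμ0 : 0 ≤ μ := hμ ▸ Real.sqrt_nonneg _
  have hμ2 : μ ^ 2 = H ^ 2 - 1 := by
    rw [hμ, Real.sq_sqrt h1.le]
  have hμpos : 0 < μ := by nlinarith
  have key : ∀ t : ℝ, 4*μ^2*(t + t^2 - (H*t - δ)^2)
      = -(2*μ^2*t - (1+2*H*δ))^2 + (1+2*(H-μ)*δ)*(1+2*(H+μ)*δ) := by
    intro t
    linear_combination (4*μ^2*t^2) * hμ2
  constructor
  · rintro ⟨x, hx⟩
    by_contra hc
    push_neg at hc
    have hc' : 2 * δ < μ - H := by linarith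
    -- then 1 + 2(H+μ)δ < 0 and δ < 0
    have hδneg : δ < 0 := by nlinarith
    have hf1 : 1 + 2 * (H + μ) * δ < 0 := by nlinarith
    -- case on sign of 1 + 2Hδ
    rcases le_or_gt (1 + 2 * H * δ) 0 with h0 | h0
    · nlinarith [sq_nonneg x, sq_nonneg (x^2), sq_nonneg (H*x^2 - δ), mul_nonneg (sq_nonneg x) (sq_nonneg x)]
    · have hf2 : 0 < 1 + 2 * (H - μ) * δ := by nlinarith
      nlinarith [key (x^2), sq_nonneg (2*μ^2*x^2 - (1+2*H*δ)), mul_pos hf2 (neg_pos.mpr hf1),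
        mul_nonneg (mul_pos hμpos hμpos).le hx]
  · intro hd
    have hf1 : 0 ≤ 1 + 2 * (H + μ) * δ := by nlinarith
    have hf2 : 0 ≤ 1 + 2 * (H - μ) * δ := by
      rcases le_or_gt 0 δ with h | h
      · nlinarith
      · nlinarith
    have hnum : 0 ≤ 1 + 2 * H * δ := by nlinarith
    refine ⟨Real.sqrt ((1 + 2*H*δ) / (2*μ^2)), ?_⟩
    have hx2 : (Real.sqrt ((1 + 2*H*δ) / (2*μ^2))) ^ 2 = (1 + 2*H*δ) / (2*μ^2) := by
      rw [Real.sq_sqrt]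
      positivity
    set x := Real.sqrt ((1 + 2*H*δ) / (2*μ^2)) with hxdef
    have hx4 : x ^ 4 = ((1 + 2*H*δ) / (2*μ^2)) ^ 2 := by
      rw [show x^4 = (x^2)^2 by ring, hx2]
    rw [hx2, hx4]
    have hc : 2 * μ^2 * ((1 + 2*H*δ) / (2*μ^2)) = 1 + 2*H*δ := by
      field_simp
    set c := (1 + 2*H*δ) / (2*μ^2)
    nlinarith [key c, mul_nonneg hf2 hf1, mul_pos hμpos hμpos, hc]
end

section
/- Let ε ∈ {−1,1}, H > 0 and δ > 0; if ε = 1, assume additionally that δ < (H + √(H²+1))/2. Define h(x) = x² − ε·x⁴ − (H·x² − δ)². Suppose x_m > 0 satisfies h(x_m) = 0 and h(x) < 0 for every x ∈ (0, x_m). Then H·x_m² < δ. -/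
theorem Hxm_sq_lt_delta (ε H δ x_m : ℝ)
    (hε : ε = -1 ∨ ε = 1) (hH : 0 < H) (hδ : 0 < δ)
    (hδ' : ε = 1 → δ < (H + Real.sqrt (H ^ 2 + 1)) / 2)
    (hxm : 0 < x_m)
    (hroot : x_m ^ 2 - ε * x_m ^ 4 - (H * x_m ^ 2 - δ) ^ 2 = 0)
    (hneg : ∀ x : ℝ, 0 < x → x < x_m → x ^ 2 - ε * x ^ 4 - (H * x ^ 2 - δ) ^ 2 < 0) :
    H * x_m ^ 2 < δ := by
  by_contra hcon
  push_neg at hcon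
  have hs0 : 0 < δ / H := div_pos hδ hH
  have hHs : H * (δ / H) = δ := by field_simp
  have hsle : δ / H ≤ x_m ^ 2 := (div_le_iff₀ hH).mpr (by nlinarith)
  have hx1sq : Real.sqrt (δ / H) ^ 2 = δ / H := Real.sq_sqrt hs0.le
  have hx1pos : 0 < Real.sqrt (δ / H) := Real.sqrt_pos.mpr hs0
  have hx1le : Real.sqrt (δ / H) ≤ x_m := by
    have := Real.sqrt_le_sqrt hsle
    rwa [Real.sqrt_sq hxm.le] at this
  have hx14 : Real.sqrt (δ / H) ^ 4 = (δ / H) ^ 2 := by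
    rw [show (4:ℕ) = 2 * 2 from rfl, pow_mul, hx1sq]
  rcases hε with he | he
  · subst he
    rcases eq_or_lt_of_le hx1le with heq | hlt
    · rw [← heq, hx1sq, hx14, hHs] at hroot
      nlinarith [hs0, sq_nonneg (δ / H)]
    · have := hneg _ hx1pos hlt
      rw [hx1sq, hx14, hHs] at this
      nlinarith [hs0, sq_nonneg (δ / H)]
  · subst he
    specialize hδ' rfl
    rcases lt_or_ge δ H with hdH | hdH
    · have hslt : δ / H < 1 := (div_lt_one hH).mpr hdH
      rcases eq_or_lt_of_le hx1le with heq | hlt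
      · rw [← heq, hx1sq, hx14, hHs] at hroot
        nlinarith [hs0, hslt]
      · have := hneg _ hx1pos hlt
        rw [hx1sq, hx14, hHs] at this
        nlinarith [hs0, hslt]
    · have hsqrt : Real.sqrt (H ^ 2 + 1) ^ 2 = H ^ 2 + 1 :=
        Real.sq_sqrt (by positivity)
      have hsn : 0 ≤ Real.sqrt (H ^ 2 + 1) := Real.sqrt_nonneg _
      have hD : 0 < 1 + 4 * H * δ - 4 * δ ^ 2 := by nlinarith
      set t : ℝ := (1 + 2 * H * δ) / (2 * (1 + H ^ 2)) with ht
      have ht0 : 0 < t := by positivity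
      have key : (t - t ^ 2 - (H * t - δ) ^ 2) * (4 * (1 + H ^ 2)) =
          1 + 4 * H * δ - 4 * δ ^ 2 := by
        rw [ht]; field_simp; ring
      have h4 : (0:ℝ) < 4 * (1 + H ^ 2) := by positivity
      have hq : 0 < t - t ^ 2 - (H * t - δ) ^ 2 := by
        by_contra hq'
        push_neg at hq'
        nlinarith
      have htlt : t < δ / H := by
        rw [ht, div_lt_div_iff₀ (by positivity) hH]
        nlinarith
      have htxm : t < x_m ^ 2 := lt_of_lt_of_le htlt hsle
      have hx2sq : Real.sqrt t ^ 2 = t := Real.sq_sqrt ht0.le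
      have hx2pos : 0 < Real.sqrt t := Real.sqrt_pos.mpr ht0
      have hx2lt : Real.sqrt t < x_m := by
        have := Real.sqrt_lt_sqrt ht0.le htxm
        rwa [Real.sqrt_sq hxm.le] at this
      have hx24 : Real.sqrt t ^ 4 = t ^ 2 := by
        rw [show (4:ℕ) = 2 * 2 from rfl, pow_mul, hx2sq]
      have hval := hneg _ hx2pos hx2lt
      rw [hx2sq, hx24] at hval
      linarith
end

section
/- Let H ≥ 0 and δ ∈ ℝ with H < δ < (H + √(H²+1))/2. Suppose w_m, w_M ∈ ℝ satisfy 0 < w_m < w_M < 1 and w − w² − (H·w − δ)² = (H²+1)(w − w_m)(w_M − w) for all w ∈ ℝ. Then ∫ from w_m to w_M of (δ − H·w) / (2·√w·(1−w)·√(w − w² − (H·w − δ)²)) dw > π/2. -/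
open Real Set MeasureTheory

theorem aux_cont (p q c : ℝ) (hpq : p < q) (hqc : q < c) :
    ContinuousOn (fun x => Real.arcsin (Real.sqrt ((c - q) * (x - p) / ((q - p) * (c - x)))))
      (Set.Icc p q) := by
  apply Real.continuous_arcsin.comp_continuousOn
  apply Real.continuous_sqrt.comp_continuousOn
  apply ContinuousOn.div (by fun_prop) (by fun_prop)
  intro x hx
  exact (mul_pos (by linarith) (by linarith [hx.2])).ne'

theorem aux_hasDeriv (p q c : ℝ) (hpq : p < q) (hqc : q < c) {w : ℝ} (hw : w ∈ Set.Ioo p q) :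
    HasDerivAt (fun x => Real.arcsin (Real.sqrt ((c - q) * (x - p) / ((q - p) * (c - x)))))
      (Real.sqrt ((c - p) * (c - q)) / (2 * (c - w) * Real.sqrt ((w - p) * (q - w)))) w := by
  obtain ⟨hwp, hwq⟩ := hw
  have hcw : 0 < c - w := by linarith
  have hqp : 0 < q - p := by linarith
  have hcq : 0 < c - q := by linarith
  have hcp : 0 < c - p := by linarith
  have hNpos : 0 < (c - q) * (w - p) := mul_pos hcq (by linarith)
  have hDpos : 0 < (q - p) * (c - w) := mul_pos hqp hcw
  have hMpos : 0 < (c - p) * (q - w) := mul_pos hcp (by linarith)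
  set z : ℝ → ℝ := fun x => (c - q) * (x - p) / ((q - p) * (c - x)) with hzdef
  have hzw : z w = (c - q) * (w - p) / ((q - p) * (c - w)) := rfl
  have hzw_pos : 0 < z w := div_pos hNpos hDpos
  have hzw_lt : z w < 1 := by
    rw [hzw, div_lt_one hDpos]; nlinarith
  have hu : HasDerivAt (fun x => (c - q) * (x - p)) (c - q) w := by
    simpa using ((hasDerivAt_id w).sub_const p).const_mul (c - q)
  have hv : HasDerivAt (fun x => (q - p) * (c - x)) (-(q - p)) w := by
    simpa using ((hasDerivAt_const w c).sub (hasDerivAt_id w)).const_mul (q - p)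
  have hz : HasDerivAt z (((c - q) * ((q - p) * (c - w)) - (c - q) * (w - p) * -(q - p)) /
      ((q - p) * (c - w)) ^ 2) w := hu.div hv hDpos.ne'
  have hz' : HasDerivAt z ((c - q) * (c - p) / ((q - p) * (c - w) ^ 2)) w := by
    convert hz using 1
    field_simp
    ring
  have hsq : HasDerivAt (fun x => Real.sqrt (z x))
      ((c - q) * (c - p) / ((q - p) * (c - w) ^ 2) / (2 * Real.sqrt (z w))) w :=
    hz'.sqrt hzw_pos.ne'
  have h1 : Real.sqrt (z w) ≠ -1 := by
    intro h
    have := Real.sqrt_nonneg (z w)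
    linarith [h ▸ this]
  have h2 : Real.sqrt (z w) < 1 := by
    rw [show (1 : ℝ) = Real.sqrt 1 by simp]
    exact Real.sqrt_lt_sqrt hzw_pos.le hzw_lt
  have harc := (Real.hasDerivAt_arcsin h1 h2.ne).comp w hsq
  convert harc using 1
  · rfl
  · rfl
  · rfl
  rw [Real.sq_sqrt hzw_pos.le]
  -- value computation
  have e1 : Real.sqrt (z w) = Real.sqrt ((c - q) * (w - p)) / Real.sqrt ((q - p) * (c - w)) := by
    exact_mod_cast Real.sqrt_div hNpos.le _
  have e2 : Real.sqrt (1 - z w) = Real.sqrt ((c - p) * (q - w)) / Real.sqrt ((q - p) * (c - w)) := by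
    rw [show 1 - z w = (c - p) * (q - w) / ((q - p) * (c - w)) by rw [hzw]; field_simp; ring]
    exact Real.sqrt_div hMpos.le _
  have hsDne : Real.sqrt ((q - p) * (c - w)) ≠ 0 := (Real.sqrt_pos.2 hDpos).ne'
  have hsNne : Real.sqrt ((c - q) * (w - p)) ≠ 0 := (Real.sqrt_pos.2 hNpos).ne'
  have hsMne : Real.sqrt ((c - p) * (q - w)) ≠ 0 := (Real.sqrt_pos.2 hMpos).ne'
  have hsRne : Real.sqrt ((w - p) * (q - w)) ≠ 0 := (Real.sqrt_pos.2 (mul_pos (by linarith) (by linarith))).ne'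
  have hsD2 : Real.sqrt ((q - p) * (c - w)) ^ 2 = (q - p) * (c - w) := Real.sq_sqrt hDpos.le
  have hPQ2 : Real.sqrt ((c - p) * (c - q)) ^ 2 = (c - p) * (c - q) := Real.sq_sqrt (mul_nonneg hcp.le hcq.le)
  have hMN : Real.sqrt ((c - p) * (q - w)) * Real.sqrt ((c - q) * (w - p)) = Real.sqrt ((c - p) * (c - q)) * Real.sqrt ((w - p) * (q - w)) := by
    rw [← Real.sqrt_mul hMpos.le, ← Real.sqrt_mul (mul_nonneg hcp.le hcq.le)]
    congr 1; ring
  rw [e1, e2]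
  have hwp' : (0:ℝ) < w - p := by linarith
  have hqw' : (0:ℝ) < q - w := by linarith
  have ha : Real.sqrt (c - p) ^ 2 = c - p := Real.sq_sqrt hcp.le
  have hb : Real.sqrt (c - q) ^ 2 = c - q := Real.sq_sqrt hcq.le
  have hg : Real.sqrt (q - p) ^ 2 = q - p := Real.sq_sqrt hqp.le
  have he : Real.sqrt (c - w) ^ 2 = c - w := Real.sq_sqrt hcw.le
  have hsplit : Real.sqrt ((w - p) * (q - w)) = Real.sqrt (w - p) * Real.sqrt (q - w) :=
    Real.sqrt_mul hwp'.le _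
  have hane : Real.sqrt (c - p) ≠ 0 := (Real.sqrt_pos.2 hcp).ne'
  have hbne : Real.sqrt (c - q) ≠ 0 := (Real.sqrt_pos.2 hcq).ne'
  have hgne : Real.sqrt (q - p) ≠ 0 := (Real.sqrt_pos.2 hqp).ne'
  have hene : Real.sqrt (c - w) ≠ 0 := (Real.sqrt_pos.2 hcw).ne'
  have hmne : Real.sqrt (q - w) ≠ 0 := (Real.sqrt_pos.2 hqw').ne'
  have hnne : Real.sqrt (w - p) ≠ 0 := (Real.sqrt_pos.2 hwp').ne'
  rw [hsplit]
  rw [Real.sqrt_mul hcp.le, Real.sqrt_mul hcp.le, Real.sqrt_mul hcq.le, Real.sqrt_mul hqp.le]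
  field_simp
  rw [ha, hb, hg, he]; ring

set_option maxHeartbeats 2000000 in
theorem phi_integral_gt_pi_div_two (H δ w_m w_M : ℝ)
    (hH : 0 ≤ H) (hδ1 : H < δ) (hδ2 : δ < (H + Real.sqrt (H ^ 2 + 1)) / 2)
    (hwm : 0 < w_m) (hwmM : w_m < w_M) (hwM : w_M < 1)
    (hfactor : ∀ w : ℝ,
      w - w ^ 2 - (H * w - δ) ^ 2 = (H ^ 2 + 1) * (w - w_m) * (w_M - w)) :
    (∫ w in w_m..w_M,
        (δ - H * w) /
          (2 * Real.sqrt w * (1 - w) * Real.sqrt (w - w ^ 2 - (H * w - δ) ^ 2)))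
      > Real.pi / 2 := by
  have hle : w_m ≤ w_M := hwmM.le
  have hA : (0:ℝ) < H ^ 2 + 1 := by positivity
  have hsA : (0:ℝ) < Real.sqrt (H ^ 2 + 1) := Real.sqrt_pos.2 hA
  have hδH : 0 < δ - H := by linarith
  have hδH2 : 0 < H + δ := by linarith
  have hid1 : (H ^ 2 + 1) * ((1 - w_m) * (1 - w_M)) = (δ - H) ^ 2 := by
    have h := hfactor 1; nlinarith [h]
  have hid2 : (H ^ 2 + 1) * ((1 + w_m) * (1 + w_M)) = (H + δ) ^ 2 + 2 := by
    have h := hfactor (-1); nlinarith [h]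
  have hTpos : (0:ℝ) < (H + δ) ^ 2 + 2 := by positivity
  have hsT : (0:ℝ) < Real.sqrt ((H + δ) ^ 2 + 2) := Real.sqrt_pos.2 hTpos
  set ρ : ℝ := (H + δ) / Real.sqrt ((H + δ) ^ 2 + 2) with hρdef
  have hρpos : 0 < ρ := div_pos hδH2 hsT
  set f : ℝ → ℝ := fun w =>
    (δ - H * w) / (2 * Real.sqrt w * (1 - w) * Real.sqrt (w - w ^ 2 - (H * w - δ) ^ 2)) with hfdef
  set G : ℝ → ℝ := fun x =>
    ((δ - H) / (1 - x) + (H + δ) / (1 + x)) / (2 * Real.sqrt (H ^ 2 + 1) *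
      Real.sqrt ((x - w_m) * (w_M - x))) with hGdef
  set Φ₁ : ℝ → ℝ := fun x =>
    Real.arcsin (Real.sqrt ((1 - w_M) * (x - w_m) / ((w_M - w_m) * (1 - x)))) with hΦ₁def
  set ψ : ℝ → ℝ := fun v =>
    Real.arcsin (Real.sqrt ((1 - -w_m) * (v - -w_M) / ((-w_m - -w_M) * (1 - v)))) with hψdef
  set Φ : ℝ → ℝ := fun x => Φ₁ x - ρ * ψ (-x) with hΦdef
  -- coefficient identities
  have hc1 : Real.sqrt ((1 - w_m) * (1 - w_M)) * Real.sqrt (H ^ 2 + 1) = δ - H := by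
    rw [← Real.sqrt_mul (mul_nonneg (by linarith) (by linarith))]
    rw [show (1 - w_m) * (1 - w_M) * (H ^ 2 + 1) = (δ - H) ^ 2 by linarith [hid1]]
    exact Real.sqrt_sq hδH.le
  have hc2 : Real.sqrt ((1 - -w_m) * (1 - -w_M)) * Real.sqrt (H ^ 2 + 1)
      = Real.sqrt ((H + δ) ^ 2 + 2) := by
    rw [← Real.sqrt_mul (by nlinarith : (0:ℝ) ≤ (1 - -w_m) * (1 - -w_M))]
    congr 1
    nlinarith [hid2]
  -- derivative of Φ
  have hΦderiv : ∀ x ∈ Set.Ioo w_m w_M, HasDerivAt Φ (G x) x := by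
    intro x hx
    obtain ⟨hx1, hx2⟩ := hx
    have h1mx : (0:ℝ) < 1 - x := by linarith
    have h1px : (0:ℝ) < 1 + x := by linarith
    have hRpos : (0:ℝ) < (x - w_m) * (w_M - x) := mul_pos (by linarith) (by linarith)
    have hsR : (0:ℝ) < Real.sqrt ((x - w_m) * (w_M - x)) := Real.sqrt_pos.2 hRpos
    have h1 := aux_hasDeriv w_m w_M 1 hwmM (by linarith) ⟨hx1, hx2⟩
    have h2 := aux_hasDeriv (-w_M) (-w_m) 1 (by linarith) (by linarith)
      (⟨by linarith, by linarith⟩ : -x ∈ Set.Ioo (-w_M) (-w_m))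
    have hneg : HasDerivAt (fun y : ℝ => -y) (-1) x := hasDerivAt_neg x
    have h2' := HasDerivAt.comp x h2 hneg
    have hsum := h1.sub ((h2'.const_mul ρ))
    have heq : Φ = fun x => Φ₁ x - ρ * ψ (-x) := hΦdef
    convert hsum using 1
    · rfl
    · rfl
    · rfl
    have hmc : Real.sqrt ((-x - -w_M) * (-w_m - -x)) = Real.sqrt ((x - w_m) * (w_M - x)) := by
      congr 1; ring
    rw [hmc]
    have hu1 : Real.sqrt ((1 - w_m) * (1 - w_M)) = (δ - H) / Real.sqrt (H ^ 2 + 1) := by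
      rw [eq_div_iff hsA.ne']; exact hc1
    have hu2 : ρ * Real.sqrt ((1 - -w_M) * (1 - -w_m)) = (H + δ) / Real.sqrt (H ^ 2 + 1) := by
      rw [hρdef, div_mul_eq_mul_div, div_eq_div_iff hsT.ne' hsA.ne']
      have : Real.sqrt ((1 - -w_M) * (1 - -w_m)) = Real.sqrt ((1 - -w_m) * (1 - -w_M)) := by
        rw [mul_comm]
      rw [this]
      linear_combination (H + δ) * hc2
    rw [hGdef]
    simp only []
    rw [hu1]
    rw [show Real.sqrt ((1 - -w_M) * (1 - -w_m)) / (2 * (1 - -x) * Real.sqrt ((x - w_m) * (w_M - x))) * -1 =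
      -(Real.sqrt ((1 - -w_M) * (1 - -w_m)) / (2 * (1 + x) * Real.sqrt ((x - w_m) * (w_M - x)))) by
        rw [show (1 : ℝ) - -x = 1 + x by ring]; ring]
    rw [mul_neg, sub_neg_eq_add, mul_div_assoc' ρ]
    rw [show ρ * Real.sqrt ((1 - -w_M) * (1 - -w_m)) = (H + δ) / Real.sqrt (H ^ 2 + 1) from hu2]
    field_simp
  -- continuity of Φ
  have hΦcont : ContinuousOn Φ (Set.Icc w_m w_M) := by
    have hc₁ : ContinuousOn Φ₁ (Set.Icc w_m w_M) := by
      rw [hΦ₁def]; exact aux_cont w_m w_M 1 hwmM (by linarith)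
    have hcψ : ContinuousOn (fun x => ψ (-x)) (Set.Icc w_m w_M) := by
      have h := aux_cont (-w_M) (-w_m) 1 (by linarith) (by linarith)
      rw [hψdef]
      exact h.comp continuous_neg.continuousOn
        (fun x hx => ⟨by linarith [hx.2], by linarith [hx.1]⟩)
    exact hc₁.sub (hcψ.const_smul ρ)
  -- nonnegativity of G
  have hGnn : ∀ x ∈ Set.Ioo w_m w_M, 0 ≤ G x := by
    intro x hx
    obtain ⟨hx1, hx2⟩ := hx
    apply div_nonneg
    · apply add_nonneg
      · exact div_nonneg hδH.le (by linarith)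
      · exact div_nonneg hδH2.le (by linarith)
    · positivity
  have hGIoc : IntegrableOn G (Set.Ioc w_m w_M) :=
    intervalIntegral.integrableOn_deriv_of_nonneg hΦcont hΦderiv hGnn
  have hGii : IntervalIntegrable G volume w_m w_M := by
    rw [intervalIntegrable_iff_integrableOn_Ioc_of_le hle]; exact hGIoc
  have hGval : ∫ x in w_m..w_M, G x = Φ w_M - Φ w_m :=
    intervalIntegral.integral_eq_sub_of_hasDerivAt_of_le hle hΦcont hΦderiv hGii
  -- endpoint values
  have hΦa : Φ w_m = -(ρ * (Real.pi / 2)) := by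
    rw [hΦdef]
    simp only []
    rw [hΦ₁def, hψdef]
    simp only []
    rw [show (1 - w_M) * (w_m - w_m) / ((w_M - w_m) * (1 - w_m)) = 0 by ring]
    rw [show (1 - -w_m) * (-w_m - -w_M) / ((-w_m - -w_M) * (1 - -w_m)) = 1 by
      rw [div_eq_one_iff_eq (by nlinarith)]; ring]
    rw [Real.sqrt_zero, Real.arcsin_zero, Real.sqrt_one, Real.arcsin_one]
    ring
  have hΦb : Φ w_M = Real.pi / 2 := by
    rw [hΦdef]
    simp only []
    rw [hΦ₁def, hψdef]
    simp only []
    rw [show (1 - w_M) * (w_M - w_m) / ((w_M - w_m) * (1 - w_M)) = 1 by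
      rw [div_eq_one_iff_eq (by nlinarith)]; ring]
    rw [show (1 - -w_m) * (-w_M - -w_M) / ((-w_m - -w_M) * (1 - -w_M)) = 0 by ring]
    rw [Real.sqrt_zero, Real.arcsin_zero, Real.sqrt_one, Real.arcsin_one]
    ring
  -- pointwise facts on Ioo
  have hpoint : ∀ x ∈ Set.Ioo w_m w_M,
      G x ≤ f x ∧ f x ≤ (δ - H)⁻¹ * G x ∧ 0 ≤ f x := by
    intro x hx
    obtain ⟨hx1, hx2⟩ := hx
    have h0x : (0:ℝ) < x := by linarith
    have hx1' : x < 1 := by linarith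
    have h1mx : (0:ℝ) < 1 - x := by linarith
    have h1px : (0:ℝ) < 1 + x := by linarith
    have hδx : 0 < δ - H * x := by
      have : H * x ≤ H := mul_le_of_le_one_right hH hx1'.le
      linarith
    have hSpos : 0 < x - x ^ 2 - (H * x - δ) ^ 2 := by
      rw [hfactor x]
      exact mul_pos (mul_pos hA (by linarith)) (by linarith)
    have hsS : 0 < Real.sqrt (x - x ^ 2 - (H * x - δ) ^ 2) := Real.sqrt_pos.2 hSpos
    have hsx : 0 < Real.sqrt x := Real.sqrt_pos.2 h0x
    have hsx2 : Real.sqrt x ^ 2 = x := Real.sq_sqrt h0x.le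
    have hs1mx : 0 < Real.sqrt (1 - x) := Real.sqrt_pos.2 h1mx
    have hs1mx2 : Real.sqrt (1 - x) ^ 2 = 1 - x := Real.sq_sqrt h1mx.le
    have hRpos : (0:ℝ) < (x - w_m) * (w_M - x) := mul_pos (by linarith) (by linarith)
    have hsR : (0:ℝ) < Real.sqrt ((x - w_m) * (w_M - x)) := Real.sqrt_pos.2 hRpos
    have hsSsplit : Real.sqrt (x - x ^ 2 - (H * x - δ) ^ 2)
        = Real.sqrt (H ^ 2 + 1) * Real.sqrt ((x - w_m) * (w_M - x)) := by
      rw [show x - x ^ 2 - (H * x - δ) ^ 2 = (H ^ 2 + 1) * ((x - w_m) * (w_M - x)) by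
        rw [hfactor x]; ring]
      exact Real.sqrt_mul hA.le _
    have h2sx : 2 * Real.sqrt x ≤ 1 + x := by nlinarith [sq_nonneg (1 - Real.sqrt x)]
    have hub : δ - H * x ≤ Real.sqrt x * Real.sqrt (1 - x) := by
      have h : (δ - H * x) ^ 2 ≤ x * (1 - x) := by nlinarith [hSpos]
      have h2 : Real.sqrt ((δ - H * x) ^ 2) ≤ Real.sqrt (x * (1 - x)) := Real.sqrt_le_sqrt h
      rwa [Real.sqrt_sq hδx.le, Real.sqrt_mul h0x.le] at h2
    have hfval : f x = (δ - H * x) / (Real.sqrt x * (1 - x)) /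
        (2 * Real.sqrt (x - x ^ 2 - (H * x - δ) ^ 2)) := by
      rw [hfdef]
      simp only []
      rw [div_div]
      congr 1
      ring
    have hGval' : G x = ((δ - H) / (1 - x) + (H + δ) / (1 + x)) /
        (2 * Real.sqrt (x - x ^ 2 - (H * x - δ) ^ 2)) := by
      rw [hGdef]
      simp only []
      rw [hsSsplit]
      congr 1
      ring
    have hfnn : 0 ≤ f x := by
      rw [hfval]
      apply div_nonneg (div_nonneg hδx.le (by positivity)) (by positivity)
    have key : (δ - H) / (1 - x) + (H + δ) / (1 + x) ≤ (δ - H * x) / (Real.sqrt x * (1 - x)) := by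
      rw [div_add_div _ _ h1mx.ne' h1px.ne', div_le_div_iff₀ (by positivity) (by positivity)]
      have h := mul_le_mul_of_nonneg_left h2sx (mul_nonneg hδx.le h1mx.le)
      rw [show (δ - H) * (1 + x) + (1 - x) * (H + δ) = 2 * (δ - H * x) from by ring]
      calc 2 * (δ - H * x) * (Real.sqrt x * (1 - x))
          = (δ - H * x) * (1 - x) * (2 * Real.sqrt x) := by ring
        _ ≤ (δ - H * x) * (1 - x) * (1 + x) := h
        _ = (δ - H * x) * ((1 - x) * (1 + x)) := by ring
    have hub2 : δ - H * x ≤ Real.sqrt x := by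
      have h1 : Real.sqrt (1 - x) ≤ 1 := Real.sqrt_le_one.mpr (by linarith)
      calc δ - H * x ≤ Real.sqrt x * Real.sqrt (1 - x) := hub
        _ ≤ Real.sqrt x * 1 := mul_le_mul_of_nonneg_left h1 hsx.le
        _ = Real.sqrt x := mul_one _
    refine ⟨?_, ?_, hfnn⟩
    · rw [hfval, hGval']
      exact (div_le_div_iff_of_pos_right (by positivity)).2 key
    · have hstep : (δ - H) * ((δ - H * x) / (Real.sqrt x * (1 - x))) ≤ (δ - H) / (1 - x) := by
        rw [mul_div_assoc', div_le_div_iff₀ (by positivity) h1mx]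
        have h := mul_le_mul_of_nonneg_left hub2 (mul_nonneg hδH.le h1mx.le)
        calc (δ - H) * (δ - H * x) * (1 - x) = (δ - H) * (1 - x) * (δ - H * x) := by ring
          _ ≤ (δ - H) * (1 - x) * Real.sqrt x := h
          _ = (δ - H) * (Real.sqrt x * (1 - x)) := by ring
      have h : (δ - H) * f x ≤ G x := by
        rw [hfval, hGval', mul_div_assoc']
        apply (div_le_div_iff_of_pos_right (by positivity)).2
        calc (δ - H) * ((δ - H * x) / (Real.sqrt x * (1 - x)))
            ≤ (δ - H) / (1 - x) := hstep
          _ ≤ (δ - H) / (1 - x) + (H + δ) / (1 + x) :=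
              le_add_of_nonneg_right (div_nonneg hδH2.le h1px.le)
      calc f x = (δ - H)⁻¹ * ((δ - H) * f x) := by field_simp
        _ ≤ (δ - H)⁻¹ * G x := mul_le_mul_of_nonneg_left h (inv_nonneg.2 hδH.le)
  -- integrability of f
  have hfmeas : Measurable f := by
    rw [hfdef]; fun_prop
  have hfIoc : IntegrableOn f (Set.Ioc w_m w_M) := by
    apply Integrable.mono (hGIoc.const_mul (δ - H)⁻¹) hfmeas.aestronglyMeasurable.restrict
    rw [ae_restrict_iff' measurableSet_Ioc]
    refine ae_of_all _ (fun x hx => ?_)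
    rcases eq_or_lt_of_le hx.2 with heq | hlt
    · have hS0 : x - x ^ 2 - (H * x - δ) ^ 2 = 0 := by rw [hfactor x, heq]; ring
      have hf0 : f x = 0 := by
        rw [hfdef]; simp only []; rw [hS0, Real.sqrt_zero, mul_zero, div_zero]
      rw [hf0, norm_zero]
      positivity
    · have hxI : x ∈ Set.Ioo w_m w_M := ⟨hx.1, hlt⟩
      obtain ⟨hGf, hfC, hfnn⟩ := hpoint x hxI
      rw [Real.norm_eq_abs, Real.norm_eq_abs, abs_of_nonneg hfnn,
        abs_of_nonneg (mul_nonneg (inv_nonneg.2 hδH.le) (hGnn x hxI))]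
      exact hfC
  -- compare the integrals
  have hmono : (∫ x in w_m..w_M, G x) ≤ ∫ x in w_m..w_M, f x := by
    rw [intervalIntegral.integral_of_le hle, intervalIntegral.integral_of_le hle]
    apply setIntegral_mono_on hGIoc hfIoc measurableSet_Ioc
    intro x hx
    rcases eq_or_lt_of_le hx.2 with heq | hlt
    · have hS0 : x - x ^ 2 - (H * x - δ) ^ 2 = 0 := by rw [hfactor x, heq]; ring
      have hR0 : (x - w_m) * (w_M - x) = 0 := by rw [heq]; ring
      have hf0 : f x = 0 := by
        rw [hfdef]; simp only []; rw [hS0, Real.sqrt_zero, mul_zero, div_zero]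
      have hG0 : G x = 0 := by
        rw [hGdef]; simp only []; rw [hR0, Real.sqrt_zero, mul_zero, div_zero]
      rw [hf0, hG0]
    · exact (hpoint x ⟨hx.1, hlt⟩).1
  have hval2 : (∫ x in w_m..w_M, G x) = Real.pi / 2 + ρ * (Real.pi / 2) := by
    rw [hGval, hΦa, hΦb]; ring
  have hρπ : 0 < ρ * (Real.pi / 2) := mul_pos hρpos (by positivity)
  have hfin : Real.pi / 2 < ∫ x in w_m..w_M, f x := by linarith
  exact hfin
end

section
/- Let ε ∈ {−1,1} and H ≥ 0 with H² + ε > 0, and set μ = √(H²+ε). Let b ≥ 1 and c ≥ 1 be real numbers such that (H − μc²)² + ε > 0. Then 0 < √((H − c²μ)² + ε) / (c·μ·√((1/c + bc)·(1/c + c/b))) < 1. -/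
theorem period_map_of_rotational_in_unit_interval (ε H μ b c : ℝ)
    (hε : ε = -1 ∨ ε = 1) (hH : 0 ≤ H) (hHε : 0 < H ^ 2 + ε)
    (hμ : μ = Real.sqrt (H ^ 2 + ε))
    (hb : 1 ≤ b) (hc : 1 ≤ c)
    (hcompact : 0 < (H - μ * c ^ 2) ^ 2 + ε) :
    0 < Real.sqrt ((H - c ^ 2 * μ) ^ 2 + ε) /
          (c * μ * Real.sqrt ((1/c + b*c) * (1/c + c/b))) ∧
    Real.sqrt ((H - c ^ 2 * μ) ^ 2 + ε) /
          (c * μ * Real.sqrt ((1/c + b*c) * (1/c + c/b))) < 1 := by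
  have hc0 : 0 < c := lt_of_lt_of_le one_pos hc
  have hb0 : 0 < b := lt_of_lt_of_le one_pos hb
  have hμpos : 0 < μ := hμ ▸ Real.sqrt_pos.mpr hHε
  have hμ2 : μ ^ 2 = H ^ 2 + ε := by rw [hμ]; exact Real.sq_sqrt hHε.le
  have hA : 0 < (H - c ^ 2 * μ) ^ 2 + ε := by nlinarith [hcompact]
  have hP : 0 < (1/c + b*c) * (1/c + c/b) := by positivity
  have hD : 0 < c * μ * Real.sqrt ((1/c + b*c) * (1/c + c/b)) := by positivity
  refine ⟨div_pos (Real.sqrt_pos.mpr hA) hD, ?_⟩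
  rw [div_lt_one hD]
  have hbb : 2 ≤ b + 1/b := by
    have h1 : b * (1/b) = 1 := by field_simp
    nlinarith [sq_nonneg (b - 1)]
  have key : (H - c ^ 2 * μ) ^ 2 + ε <
      (c * μ) ^ 2 * ((1/c + b*c) * (1/c + c/b)) := by
    have e1 : (c * μ) ^ 2 * ((1/c + b*c) * (1/c + c/b))
        = μ ^ 2 * (1 + (b + 1/b) * c ^ 2 + c ^ 4) := by
      field_simp; ring
    rw [e1]
    nlinarith [mul_pos (mul_pos hμpos hμpos) (mul_pos hc0 hc0),
      mul_nonneg (mul_nonneg hH (mul_pos hc0 hc0).le) hμpos.le,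
      mul_nonneg (mul_nonneg (mul_pos hμpos hμpos).le (mul_pos hc0 hc0).le)
        (by linarith : (0:ℝ) ≤ b + 1/b - 2)]
  calc Real.sqrt ((H - c ^ 2 * μ) ^ 2 + ε)
      < Real.sqrt ((c * μ) ^ 2 * ((1/c + b*c) * (1/c + c/b))) :=
        Real.sqrt_lt_sqrt hA.le key
    _ = c * μ * Real.sqrt ((1/c + b*c) * (1/c + c/b)) := by
        rw [Real.sqrt_mul (by positivity), Real.sqrt_sq (by positivity)]
end

section
/- Let H, c₀, Q, α, β, u₀ ∈ ℝ. Let ω : ℝ² → ℝ and ψ, N : ℝ² → ℝ⁴ be infinitely differentiable maps satisfying, for all (u,v) ∈ ℝ², the Gauss–Weingarten equations ψ_uu = ω_u·ψ_u − ω_v·ψ_v + (H·e^{2ω} + 2Q)·N − c₀·e^{2ω}·ψ, ψ_uv = ω_v·ψ_u + ω_u·ψ_v, ψ_vv = −ω_u·ψ_u + ω_v·ψ_v + (H·e^{2ω} − 2Q)·N − c₀·e^{2ω}·ψ, N_u = −(H + 2Q·e^{−2ω})·ψ_u, N_v = −(H − 2Q·e^{−2ω})·ψ_v. Suppose that 2·∂ω/∂u(u₀,v)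 = α·e^{ω(u₀,v)} + β·e^{−ω(u₀,v)} for every v ∈ ℝ. Then the map v ↦ 4Q·e^{−ω(u₀,v)}·ψ_u(u₀,v) − β·N(u₀,v) − (2Qα + Hβ)·ψ(u₀,v) is constant on ℝ. -/
/-- Partial derivative in the first variable of a curried function. -/
noncomputable def pdU {E : Type*} [NormedAddCommGroup E] [NormedSpace ℝ E]
    (f : ℝ → ℝ → E) (u v : ℝ) : E := deriv (fun t => f t v) u

/-- Partial derivative in the second variable of a curried function. -/
noncomputable def pdV {E : Type*} [NormedAddCommGroup E] [NormedSpace ℝ E]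
    (f : ℝ → ℝ → E) (u v : ℝ) : E := deriv (fun t => f u t) v

section aux
variable {E : Type*} [NormedAddCommGroup E] [NormedSpace ℝ E]

lemma pdU_eq_fderiv (f : ℝ → ℝ → E)
    (hf : ContDiff ℝ (⊤ : ℕ∞) (fun p : ℝ × ℝ => f p.1 p.2)) (u v : ℝ) :
    pdU f u v = fderiv ℝ (fun p : ℝ × ℝ => f p.1 p.2) (u, v) (1, 0) := by
  have hcurve : HasDerivAt (fun t : ℝ => (t, v)) ((1 : ℝ), (0 : ℝ)) u :=
    (hasDerivAt_id u).prodMk (hasDerivAt_const u v)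
  have h : HasDerivAt (fun t => f t v)
      (fderiv ℝ (fun p : ℝ × ℝ => f p.1 p.2) (u, v) (1, 0)) u :=
    HasFDerivAt.comp_hasDerivAt (f := fun t : ℝ => (t, v)) u ((hf.differentiable (by simp) (u, v)).hasFDerivAt) hcurve
  exact h.deriv

lemma smooth_pdU (f : ℝ → ℝ → E)
    (hf : ContDiff ℝ (⊤ : ℕ∞) (fun p : ℝ × ℝ => f p.1 p.2)) :
    ContDiff ℝ (⊤ : ℕ∞) (fun p : ℝ × ℝ => pdU f p.1 p.2) := by
  have : (fun p : ℝ × ℝ => pdU f p.1 p.2)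
      = fun p : ℝ × ℝ => fderiv ℝ (fun q : ℝ × ℝ => f q.1 q.2) p (1, 0) := by
    funext p; exact pdU_eq_fderiv f hf p.1 p.2
  rw [this]
  exact (hf.fderiv_right (by simp)).clm_apply contDiff_const

lemma hasDerivAt_pdV (f : ℝ → ℝ → E)
    (hf : ContDiff ℝ (⊤ : ℕ∞) (fun p : ℝ × ℝ => f p.1 p.2)) (u v : ℝ) :
    HasDerivAt (fun t => f u t) (pdV f u v) v := by
  have hd : DifferentiableAt ℝ (fun t => f u t) v := by
    have := (hf.differentiable (by simp)).comp
      ((differentiable_const u).prodMk differentiable_id : Differentiable ℝ fun t : ℝ => (u, t))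
    exact this.differentiableAt
  exact hd.hasDerivAt

end aux

theorem spherical_curvature_line_vector_constant (H c₀ Q α β u₀ : ℝ)
    (ω : ℝ → ℝ → ℝ) (ψ N : ℝ → ℝ → (Fin 4 → ℝ))
    (hω : ContDiff ℝ (⊤ : ℕ∞) (fun p : ℝ × ℝ => ω p.1 p.2))
    (hψ : ContDiff ℝ (⊤ : ℕ∞) (fun p : ℝ × ℝ => ψ p.1 p.2))
    (hN : ContDiff ℝ (⊤ : ℕ∞) (fun p : ℝ × ℝ => N p.1 p.2))
    -- Gauss–Weingarten equations
    (hGW1 : ∀ u v : ℝ, pdU (pdU ψ) u v =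
      pdU ω u v • pdU ψ u v - pdV ω u v • pdV ψ u v
        + (H * Real.exp (2 * ω u v) + 2 * Q) • N u v
        - (c₀ * Real.exp (2 * ω u v)) • ψ u v)
    (hGW2 : ∀ u v : ℝ, pdV (pdU ψ) u v =
      pdV ω u v • pdU ψ u v + pdU ω u v • pdV ψ u v)
    (hGW3 : ∀ u v : ℝ, pdV (pdV ψ) u v =
      -(pdU ω u v) • pdU ψ u v + pdV ω u v • pdV ψ u v
        + (H * Real.exp (2 * ω u v) - 2 * Q) • N u v
        - (c₀ * Real.exp (2 * ω u v)) • ψ u v)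
    (hGW4 : ∀ u v : ℝ, pdU N u v = -(H + 2 * Q * Real.exp (-(2 * ω u v))) • pdU ψ u v)
    (hGW5 : ∀ u v : ℝ, pdV N u v = -(H - 2 * Q * Real.exp (-(2 * ω u v))) • pdV ψ u v)
    -- overdetermined condition along the line u = u₀
    (hover : ∀ v : ℝ, 2 * pdU ω u₀ v =
      α * Real.exp (ω u₀ v) + β * Real.exp (-(ω u₀ v))) :
    ∃ C : Fin 4 → ℝ, ∀ v : ℝ,
      (4 * Q * Real.exp (-(ω u₀ v))) • pdU ψ u₀ v - β • N u₀ v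
        - (2 * Q * α + H * β) • ψ u₀ v = C := by
  set g : ℝ → (Fin 4 → ℝ) := fun v =>
    (4 * Q * Real.exp (-(ω u₀ v))) • pdU ψ u₀ v - β • N u₀ v
      - (2 * Q * α + H * β) • ψ u₀ v with hg
  have key : ∀ v : ℝ, HasDerivAt g 0 v := by
    intro v
    have hωv : HasDerivAt (fun t => ω u₀ t) (pdV ω u₀ v) v := hasDerivAt_pdV ω hω u₀ v
    have hψv : HasDerivAt (fun t => ψ u₀ t) (pdV ψ u₀ v) v := hasDerivAt_pdV ψ hψ u₀ v
    have hNv : HasDerivAt (fun t => N u₀ t) (pdV N u₀ v) v := hasDerivAt_pdV N hN u₀ v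
    have hψuv : HasDerivAt (fun t => pdU ψ u₀ t) (pdV (pdU ψ) u₀ v) v :=
      hasDerivAt_pdV (pdU ψ) (smooth_pdU ψ hψ) u₀ v
    have hc : HasDerivAt (fun t => 4 * Q * Real.exp (-(ω u₀ t)))
        (4 * Q * (Real.exp (-(ω u₀ v)) * -(pdV ω u₀ v))) v := by
      have := (hωv.neg.exp).const_mul (4 * Q)
      simpa using this
    have h1 : HasDerivAt (fun t => (4 * Q * Real.exp (-(ω u₀ t))) • pdU ψ u₀ t)
        ((4 * Q * Real.exp (-(ω u₀ v))) • pdV (pdU ψ) u₀ v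
          + (4 * Q * (Real.exp (-(ω u₀ v)) * -(pdV ω u₀ v))) • pdU ψ u₀ v) v :=
      hc.smul hψuv
    have h2 : HasDerivAt (fun t => β • N u₀ t) (β • pdV N u₀ v) v := hNv.const_smul β
    have h3 : HasDerivAt (fun t => (2 * Q * α + H * β) • ψ u₀ t)
        ((2 * Q * α + H * β) • pdV ψ u₀ v) v := hψv.const_smul (2 * Q * α + H * β)
    have hD := (h1.sub h2).sub h3
    have hzero : (4 * Q * Real.exp (-(ω u₀ v))) • pdV (pdU ψ) u₀ v
          + (4 * Q * (Real.exp (-(ω u₀ v)) * -(pdV ω u₀ v))) • pdU ψ u₀ v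
          - β • pdV N u₀ v - (2 * Q * α + H * β) • pdV ψ u₀ v = 0 := by
      rw [hGW2 u₀ v, hGW5 u₀ v]
      have e1 : Real.exp (-(ω u₀ v)) * Real.exp (ω u₀ v) = 1 := by
        rw [← Real.exp_add]; simp
      have e2 : Real.exp (-(ω u₀ v)) * Real.exp (-(ω u₀ v)) = Real.exp (-(2 * ω u₀ v)) := by
        rw [← Real.exp_add]; ring_nf
      have hov := hover v
      match_scalars
      · ring
      · linear_combination (2*Q*Real.exp (-(ω u₀ v))) * hov + (2*Q*α) * e1 + (2*Q*β) * e2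
    rw [← hzero]
    exact hD
  have hdiff : Differentiable ℝ g := fun v => (key v).differentiableAt
  have hderiv : ∀ v, deriv g v = 0 := fun v => (key v).deriv
  refine ⟨g 0, fun v => ?_⟩
  exact is_const_of_deriv_eq_zero hdiff hderiv v 0
end

section
/- Fix l > 0. For each r > 0, set â_r = (l−2)·r, and let y_r, z_r : ℝ → ℝ be twice differentiable functions satisfying the Wente ODE system with parameter â_r together with the initial conditions y_r(0) = z_r(0) = 0, y_r'(0) = (1+r)·√(l·r), z_r'(0) = r·√(l·r + 1). Then for every ϵ ∈ (0,π) there exists r₀ > 0 such that for every r ∈ (0, r₀) there exists τ with |τ − π| < ϵ, y_r(τ) = z_r(τ), and y_r(u) > z_r(u) for all u ∈ (0,τ). -/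
open Set Real Filter Topology

/-!
For small `r` the solution is a perturbation of the linearisation at `0`, `y'' = -y`, `z'' = 0`,
so `y ≈ √(l r) sin u` and `z ≈ r √(l r + 1) u`. A Gronwall bootstrap keeps `(y, y', z, z')` of
size `O(√r)` on `[0, 2π]`; hence the remaining forcing (the parameter `(l - 2) r` and the cubic
terms) is `O(r^{3/2})`, and `y - z = √(l r) sin u + O(r u)`. As `√r ≫ r`, concavity of `sin` makes
`y - z` positive on `(0, π - ϵ/2]`, while it is negative at `π + ϵ/2`; its first zero is `τ`.
-/

theorem ContinuousOn.exists_first_zero {f : ℝ → ℝ} {a b : ℝ} (hf : ContinuousOn f (Icc a b))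
    (hab : a ≤ b) (ha : 0 < f a) (hb : f b ≤ 0) :
    ∃ τ ∈ Ioc a b, f τ = 0 ∧ ∀ u ∈ Ico a τ, 0 < f u := by
  set S := Icc a b ∩ f ⁻¹' Iic 0
  have hbdd : BddBelow S := ⟨a, fun x hx => hx.1.1⟩
  have hτ : sInf S ∈ S :=
    (hf.preimage_isClosed_of_isClosed isClosed_Icc isClosed_Iic).csInf_mem
      ⟨b, right_mem_Icc.2 hab, hb⟩ hbdd
  set τ := sInf S
  have hpos : ∀ u ∈ Ico a τ, 0 < f u := fun u hu => not_le.1 fun h =>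
    notMem_of_lt_csInf hu.2 hbdd ⟨⟨hu.1, hu.2.le.trans hτ.1.2⟩, h⟩
  have haτ : a < τ := hτ.1.1.lt_of_ne fun h => (h ▸ ha).not_ge hτ.2
  refine ⟨τ, ⟨haτ, hτ.1.2⟩, le_antisymm hτ.2 ?_, hpos⟩
  by_contra! hneg
  obtain ⟨x, hx, hfx⟩ := intermediate_value_Icc' haτ.le
    (hf.mono (Icc_subset_Icc_right hτ.1.2)) ⟨hneg.le, ha.le⟩
  have hxτ : x < τ := hx.2.lt_of_ne fun h => by rw [h] at hfx; linarith
  exact (hpos x ⟨hx.1, hxτ⟩).ne' hfx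

theorem sin_div_mul_le_sin {α u : ℝ} (hα : α ≤ π) (hu : 0 ≤ u) (huα : u ≤ α) :
    sin α / α * u ≤ sin u := by
  rcases hu.eq_or_lt with rfl | hu0
  · simp
  have hα0 : 0 < α := hu0.trans_le huα
  have h := strictConcaveOn_sin_Icc.concaveOn.2 ⟨le_rfl, pi_pos.le⟩ ⟨hα0.le, hα⟩
    (sub_nonneg.2 ((div_le_one hα0).2 huα)) (div_nonneg hu hα0.le) (sub_add_cancel 1 (u / α))
  simp only [smul_eq_mul, mul_zero, sin_zero, zero_add, div_mul_cancel₀ u hα0.ne'] at h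
  rwa [div_mul_comm]

theorem abs_le_mul_of_abs_deriv_le {g g' : ℝ → ℝ} {C T : ℝ} (hg : ∀ u, HasDerivAt g (g' u) u)
    (h0 : g 0 = 0) (hC : ∀ u ∈ Icc 0 T, |g' u| ≤ C) : ∀ u ∈ Icc 0 T, |g u| ≤ C * u := by
  simpa [h0] using norm_image_sub_le_of_norm_deriv_le_segment'
    (fun u _ => (hg u).hasDerivWithinAt) (fun u hu => hC u (Ico_subset_Icc_self hu))

theorem abs_sub_deriv_mul_sin_le {y : ℝ → ℝ} {ε T : ℝ} (hy : ∀ u, DifferentiableAt ℝ y u)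
    (hy' : ∀ u, DifferentiableAt ℝ (deriv y) u) (h0 : y 0 = 0)
    (hf : ∀ u ∈ Icc 0 T, |deriv (deriv y) u + y u| ≤ ε) :
    ∀ u ∈ Icc 0 T, |y u - deriv y 0 * sin u| ≤ 2 * ε * u := by
  set f := fun u => deriv (deriv y) u + y u
  set p := fun u => y u - deriv y 0 * sin u
  set q := fun u => deriv y u - deriv y 0 * cos u
  have hp : ∀ u, HasDerivAt p (q u) u := fun u =>
    (hy u).hasDerivAt.sub ((hasDerivAt_sin u).const_mul _)
  have hq : ∀ u, HasDerivAt q (f u - p u) u := fun u =>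
    ((hy' u).hasDerivAt.sub ((hasDerivAt_cos u).const_mul _)).congr_deriv (by simp [f, p]; ring)
  -- variation of constants: `p = c₂ sin - c₁ cos`, where `c₁' = f sin` and `c₂' = f cos`
  have hc₁ := abs_le_mul_of_abs_deriv_le (g := fun u => q u * sin u - p u * cos u)
    (fun u => (((hq u).mul (hasDerivAt_sin u)).sub ((hp u).mul (hasDerivAt_cos u))).congr_deriv
      (show _ = f u * sin u by ring))
    (by simp [p, h0]) fun u hu => by
      rw [abs_mul]; exact (mul_le_of_le_one_right (abs_nonneg _) (abs_sin_le_one u)).trans (hf u hu)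
  have hc₂ := abs_le_mul_of_abs_deriv_le (g := fun u => q u * cos u + p u * sin u)
    (fun u => (((hq u).mul (hasDerivAt_cos u)).add ((hp u).mul (hasDerivAt_sin u))).congr_deriv
      (show _ = f u * cos u by ring))
    (by simp [q]) fun u hu => by
      rw [abs_mul]; exact (mul_le_of_le_one_right (abs_nonneg _) (abs_cos_le_one u)).trans (hf u hu)
  intro u hu
  have hrot : p u = (q u * cos u + p u * sin u) * sin u - (q u * sin u - p u * cos u) * cos u := by
    linear_combination (-(p u)) * sin_sq_add_cos_sq u
  calc |p u| = |(q u * cos u + p u * sin u) * sin u - (q u * sin u - p u * cos u) * cos u| :=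
        congrArg _ hrot
    _ ≤ |q u * cos u + p u * sin u| * |sin u| + |q u * sin u - p u * cos u| * |cos u| := by
        rw [← abs_mul, ← abs_mul]; exact abs_sub _ _
    _ ≤ ε * u + ε * u := add_le_add
        ((mul_le_of_le_one_right (abs_nonneg _) (abs_sin_le_one u)).trans (hc₂ u hu))
        ((mul_le_of_le_one_right (abs_nonneg _) (abs_cos_le_one u)).trans (hc₁ u hu))
    _ = 2 * ε * u := by ring

theorem abs_sub_deriv_mul_le {z : ℝ → ℝ} {ε T : ℝ} (hz : ∀ u, DifferentiableAt ℝ z u)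
    (hz' : ∀ u, DifferentiableAt ℝ (deriv z) u) (h0 : z 0 = 0)
    (hf : ∀ u ∈ Icc 0 T, |deriv (deriv z) u| ≤ ε) :
    ∀ u ∈ Icc 0 T, |z u - deriv z 0 * u| ≤ ε * T * u := by
  have h' := abs_le_mul_of_abs_deriv_le (g := fun u => deriv z u - deriv z 0)
    (fun u => (hz' u).hasDerivAt.sub_const _) (sub_self _) hf
  refine abs_le_mul_of_abs_deriv_le
    (fun u => (hz u).hasDerivAt.sub ((hasDerivAt_id u).const_mul (deriv z 0) |>.congr_deriv
      (mul_one _))) (by simp [h0]) fun u hu => (h' u hu).trans ?_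
  exact mul_le_mul_of_nonneg_left hu.2 ((abs_nonneg _).trans (hf u hu))

section Gronwall

variable {E : Type*} [NormedAddCommGroup E] [NormedSpace ℝ E] {F G : ℝ → E} {δ K T : ℝ}

theorem norm_le_mul_exp_of_norm_deriv_le (hF : ∀ u, HasDerivAt F (G u) u) (h0 : ‖F 0‖ ≤ δ)
    (hG : ∀ u ∈ Ico 0 T, ‖G u‖ ≤ K * ‖F u‖) : ∀ u ∈ Icc 0 T, ‖F u‖ ≤ δ * exp (K * u) := by
  intro u hu
  simpa [gronwallBound_ε0] using norm_le_gronwallBound_of_norm_deriv_right_le (ε := 0)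
    (fun x _ => (hF x).continuousAt.continuousWithinAt) (fun x _ => (hF x).hasDerivWithinAt) h0
    (by simpa using hG) u hu

/-- Gronwall for a vector field that is linearly bounded only on the unit ball: a trajectory
starting close enough to `0` does not leave the ball before time `T`. -/
theorem norm_le_mul_exp_of_norm_deriv_le_of_norm_le_one (hF : ∀ u, HasDerivAt F (G u) u)
    (hK : 0 ≤ K) (h0 : ‖F 0‖ ≤ δ) (hG : ∀ u, ‖F u‖ ≤ 1 → ‖G u‖ ≤ K * ‖F u‖)
    (hδ : δ * exp (K * T) < 1) : ∀ u ∈ Icc 0 T, ‖F u‖ ≤ δ * exp (K * u) := by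
  have hδT : ∀ u ∈ Icc 0 T, δ * exp (K * u) < 1 := fun u hu => lt_of_le_of_lt
    (mul_le_mul_of_nonneg_left (exp_le_exp.2 (mul_le_mul_of_nonneg_left hu.2 hK))
      ((norm_nonneg _).trans h0)) hδ
  have hball : ∀ t ∈ Icc 0 T, ‖F t‖ < 1 := by
    intro t ht
    by_contra! h
    have hF0 : ‖F 0‖ < 1 := h0.trans_lt (by simpa using hδT 0 ⟨le_rfl, ht.1.trans ht.2⟩)
    obtain ⟨τ, hτ, hτ1, hlt⟩ := ContinuousOn.exists_first_zero (f := fun u => 1 - ‖F u‖)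
      (fun x _ => (continuous_const.sub continuous_norm).continuousAt.comp
        (hF x).continuousAt |>.continuousWithinAt) ht.1 (by simpa using hF0) (by simpa using h)
    have hFτ := norm_le_mul_exp_of_norm_deriv_le hF h0
      (fun u hu => hG u (by linarith [hlt u hu])) τ ⟨hτ.1.le, le_rfl⟩
    linarith [hδT τ ⟨hτ.1.le, hτ.2.trans ht.2⟩]
  exact norm_le_mul_exp_of_norm_deriv_le hF h0
    fun u hu => hG u (hball u (Ico_subset_Icc_self hu)).le

end Gronwall

theorem abs_wente_nonlinearity_le {c w y z m : ℝ} (hw : |w| ≤ m) (hy : |y| ≤ m) (hz : |z| ≤ m) :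
    |c * w - 2 * w * (y ^ 2 - z ^ 2)| ≤ |c| * m + 2 * m ^ 3 := by
  have hm : 0 ≤ m := (abs_nonneg w).trans hw
  have hy2 : y ^ 2 ≤ m ^ 2 := sq_le_sq' (abs_le.1 hy).1 (abs_le.1 hy).2
  have hz2 : z ^ 2 ≤ m ^ 2 := sq_le_sq' (abs_le.1 hz).1 (abs_le.1 hz).2
  have hyz := abs_sub_le_of_nonneg_of_le (sq_nonneg y) hy2 (sq_nonneg z) hz2
  calc |c * w - 2 * w * (y ^ 2 - z ^ 2)| ≤ |c * w| + |2 * w * (y ^ 2 - z ^ 2)| := abs_sub _ _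
    _ = |c| * |w| + 2 * |w| * |y ^ 2 - z ^ 2| := by rw [abs_mul, abs_mul, abs_mul, abs_two]
    _ ≤ |c| * m + 2 * m * m ^ 2 := by gcongr
    _ = |c| * m + 2 * m ^ 3 := by ring

namespace WenteSystem

variable {ahat δ m T : ℝ} {y z : ℝ → ℝ}

/-- In the unit ball the cubic terms are dominated by the linear ones, so the state
`(y, y', z, z')` grows at most at the Gronwall rate `|ahat| + 3`. -/
theorem abs_le (hs : WenteSystem ahat y z) (hy0 : y 0 = 0) (hz0 : z 0 = 0)
    (hy'0 : |deriv y 0| ≤ δ) (hz'0 : |deriv z 0| ≤ δ) (hδ : δ * exp ((|ahat| + 3) * T) < 1) :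
    ∀ u ∈ Icc 0 T, |y u| ≤ δ * exp ((|ahat| + 3) * T) ∧ |z u| ≤ δ * exp ((|ahat| + 3) * T) := by
  obtain ⟨hy, hy', hz, hz', hy'', hz''⟩ := hs
  set F : ℝ → ℝ × ℝ × ℝ × ℝ := fun u => (y u, deriv y u, z u, deriv z u)
  have hF : ∀ u, HasDerivAt F (deriv y u, deriv (deriv y) u, deriv z u, deriv (deriv z) u) u :=
    fun u => (hy u).hasDerivAt.prodMk ((hy' u).hasDerivAt.prodMk
      ((hz u).hasDerivAt.prodMk (hz' u).hasDerivAt))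
  have hG : ∀ u, ‖F u‖ ≤ 1 → ‖(deriv y u, deriv (deriv y) u, deriv z u, deriv (deriv z) u)‖ ≤
      (|ahat| + 3) * ‖F u‖ := by
    intro u h1
    obtain ⟨hyN, hy'N, hzN, hz'N⟩ : |y u| ≤ ‖F u‖ ∧ |deriv y u| ≤ ‖F u‖ ∧ |z u| ≤ ‖F u‖ ∧
        |deriv z u| ≤ ‖F u‖ := by
      simp [F]
    have hN := norm_nonneg (F u)
    have hN3 : ‖F u‖ ^ 3 ≤ ‖F u‖ := pow_le_of_le_one hN h1 (by norm_num)
    have hahat : |ahat - 1| ≤ |ahat| + 1 := by simpa using abs_sub ahat 1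
    have hyy := abs_wente_nonlinearity_le (c := ahat - 1) hyN hyN hzN
    have hzz := abs_wente_nonlinearity_le (c := ahat) hzN hyN hzN
    simp only [norm_prod_le_iff, Real.norm_eq_abs, hy'' u, hz'' u]
    refine ⟨?_, ?_, ?_, ?_⟩ <;> nlinarith [abs_nonneg ahat]
  have hδ0 : 0 ≤ δ := (abs_nonneg _).trans hy'0
  have hF0 : ‖F 0‖ ≤ δ := by
    simp only [F, hy0, hz0, norm_prod_le_iff, norm_zero, Real.norm_eq_abs]
    exact ⟨hδ0, hy'0, hδ0, hz'0⟩
  intro u hu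
  have hFu :=
    (norm_le_mul_exp_of_norm_deriv_le_of_norm_le_one hF (by positivity) hF0 hG hδ u hu).trans
    (mul_le_mul_of_nonneg_left (exp_le_exp.2 (mul_le_mul_of_nonneg_left hu.2 (by positivity))) hδ0)
  exact ⟨(norm_fst_le (F u)).trans hFu,
    ((norm_fst_le _).trans (norm_snd_le _)).trans ((norm_snd_le (F u)).trans hFu)⟩

theorem abs_sub_linearization_le (hs : WenteSystem ahat y z) (hy0 : y 0 = 0) (hz0 : z 0 = 0)
    (hy'0 : |deriv y 0| ≤ δ) (hz'0 : |deriv z 0| ≤ δ) (hδ : δ * exp ((|ahat| + 3) * T) ≤ m)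
    (hm : m < 1) :
    ∀ u ∈ Icc 0 T, |y u - deriv y 0 * sin u| ≤ 2 * (|ahat| * m + 2 * m ^ 3) * u ∧
      |z u - deriv z 0 * u| ≤ (|ahat| * m + 2 * m ^ 3) * T * u := by
  have hbd := hs.abs_le hy0 hz0 hy'0 hz'0 (hδ.trans_lt hm)
  obtain ⟨hy, hy', hz, hz', hy'', hz''⟩ := hs
  have hfy : ∀ u ∈ Icc 0 T, |deriv (deriv y) u + y u| ≤ |ahat| * m + 2 * m ^ 3 := by
    intro u hu
    obtain ⟨hyu, hzu⟩ := hbd u hu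
    rw [hy'' u, show ∀ a b : ℝ, (ahat - 1) * a - b + a = ahat * a - b by intros; ring]
    exact abs_wente_nonlinearity_le (hyu.trans hδ) (hyu.trans hδ) (hzu.trans hδ)
  have hfz : ∀ u ∈ Icc 0 T, |deriv (deriv z) u| ≤ |ahat| * m + 2 * m ^ 3 := by
    intro u hu
    obtain ⟨hyu, hzu⟩ := hbd u hu
    rw [hz'' u]
    exact abs_wente_nonlinearity_le (hzu.trans hδ) (hyu.trans hδ) (hzu.trans hδ)
  exact fun u hu => ⟨abs_sub_deriv_mul_sin_le hy hy' hy0 hfy u hu,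
    abs_sub_deriv_mul_le hz hz' hz0 hfz u hu⟩

end WenteSystem

theorem abs_sub_sub_mul_sin_le {y z v w a A B c d u : ℝ} (hu : 0 ≤ u)
    (hy : |y - v * sin u| ≤ A * u) (hz : |z - w * u| ≤ B * u) (hv : |v - a| ≤ c) (hw : |w| ≤ d) :
    |y - z - a * sin u| ≤ (A + B + c + d) * u := by
  have hsin : |sin u| ≤ u := abs_sin_le_abs.trans (abs_of_nonneg hu).le
  have hc : 0 ≤ c := (abs_nonneg _).trans hv
  calc |y - z - a * sin u| = |(y - v * sin u) - (z - w * u) + ((v - a) * sin u - w * u)| := by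
        ring_nf
    _ ≤ |y - v * sin u| + |z - w * u| + (|(v - a) * sin u| + |w * u|) :=
        (abs_add_le _ _).trans (add_le_add (abs_sub _ _) (abs_sub _ _))
    _ = |y - v * sin u| + |z - w * u| + (|v - a| * |sin u| + |w| * u) := by
        rw [abs_mul, abs_mul, abs_of_nonneg hu]
    _ ≤ A * u + B * u + (c * u + d * u) := by gcongr
    _ = (A + B + c + d) * u := by ring

theorem wente_sub_sqrt_mul_sin_le {l : ℝ} (hl : 0 ≤ l) :
    ∃ C, ∀ᶠ r in 𝓝[>] 0, ∀ y z : ℝ → ℝ, WenteSystem ((l - 2) * r) y z → y 0 = 0 → z 0 = 0 →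
      deriv y 0 = (1 + r) * √(l * r) → deriv z 0 = r * √(l * r + 1) →
      ∀ u ∈ Icc 0 (2 * π), |y u - z u - √(l * r) * sin u| ≤ C * r * u := by
  set M := 2 * √(l + 1) * exp ((|l - 2| + 3) * (2 * π))
  set C₁ := |l - 2| * M + 2 * M ^ 3
  refine ⟨(2 + 2 * π) * C₁ + √l + √(l + 1), ?_⟩
  have hM : Tendsto (fun r => M * √r) (𝓝[>] 0) (𝓝 0) := by
    simpa using (tendsto_const_nhds (x := M)).mul (continuous_sqrt.tendsto 0)
      |>.mono_left nhdsWithin_le_nhds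
  filter_upwards [self_mem_nhdsWithin, nhdsWithin_le_nhds (eventually_le_nhds zero_lt_one),
    hM.eventually (gt_mem_nhds one_pos)] with r (hr : 0 < r) hr1 hrM y z hs hy0 hz0 hy'0 hz'0 u hu
  set s := √r
  have hs0 : 0 < s := sqrt_pos.2 hr
  have hs1 : s ≤ 1 := sqrt_le_one.2 hr1
  have hss : s * s = r := mul_self_sqrt hr.le
  have hlr : √(l * r) = √l * s := sqrt_mul hl r
  have hll : √l ≤ √(l + 1) := sqrt_le_sqrt (by linarith)
  have hlr1 : √(l * r + 1) ≤ √(l + 1) := sqrt_le_sqrt (by nlinarith)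
  have hv : |deriv y 0| ≤ 2 * √(l + 1) * s := by
    rw [hy'0, hlr, abs_of_nonneg (by positivity)]
    calc (1 + r) * (√l * s) ≤ 2 * (√(l + 1) * s) := by gcongr; linarith
      _ = _ := by ring
  have hw : |deriv z 0| ≤ 2 * √(l + 1) * s := by
    rw [hz'0, abs_of_nonneg (by positivity)]
    calc r * √(l * r + 1) ≤ s * √(l + 1) := by gcongr; nlinarith
      _ ≤ _ := by nlinarith [sqrt_nonneg (l + 1)]
  have hexp : 2 * √(l + 1) * s * exp ((|(l - 2) * r| + 3) * (2 * π)) ≤ M * s := by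
    have hahat : |(l - 2) * r| ≤ |l - 2| := by
      rw [abs_mul, abs_of_pos hr]
      exact mul_le_of_le_one_right (abs_nonneg _) hr1
    calc _ ≤ 2 * √(l + 1) * s * exp ((|l - 2| + 3) * (2 * π)) := by gcongr
      _ = M * s := by ring
  have hε : |(l - 2) * r| * (M * s) + 2 * (M * s) ^ 3 ≤ C₁ * r := by
    calc _ = C₁ * r * s := by rw [abs_mul, abs_of_pos hr, ← hss]; ring
      _ ≤ C₁ * r := mul_le_of_le_one_right (by positivity) hs1
  obtain ⟨hyu, hzu⟩ := hs.abs_sub_linearization_le hy0 hz0 hv hw hexp hrM u hu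
  rw [hy'0] at hyu
  rw [hz'0] at hzu
  have hshift : |(1 + r) * √(l * r) - √(l * r)| ≤ √l * r := by
    rw [show (1 + r) * √(l * r) - √(l * r) = r * √(l * r) by ring, abs_of_nonneg (by positivity),
      mul_comm]
    gcongr
    exact mul_le_of_le_one_right hl hr1
  have hlin : |r * √(l * r + 1)| ≤ √(l + 1) * r := by
    rw [abs_of_nonneg (by positivity), mul_comm]
    gcongr
  calc |y u - z u - √(l * r) * sin u|
      ≤ (2 * (C₁ * r) + C₁ * r * (2 * π) + √l * r + √(l + 1) * r) * u :=
        abs_sub_sub_mul_sin_le hu.1 (hyu.trans (by gcongr; exact hu.1))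
          (hzu.trans (by gcongr; exact hu.1)) hshift hlin
    _ = _ := by ring

theorem exists_first_zero_near_pi {D : ℝ → ℝ} (hD : Continuous D) {a b ϵ : ℝ} (hϵ : 0 < ϵ)
    (hϵπ : ϵ < π) (hbound : ∀ u ∈ Icc 0 (π + ϵ / 2), |D u - a * sin u| ≤ b * u)
    (hsmall : b * (π + ϵ / 2) < a * sin (ϵ / 2)) :
    ∃ τ, |τ - π| < ϵ ∧ D τ = 0 ∧ ∀ u, 0 < u → u < τ → 0 < D u := by
  set α := π - ϵ / 2 with hα
  set β := π + ϵ / 2 with hβ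
  have hσ : 0 < sin (ϵ / 2) := sin_pos_of_pos_of_lt_pi (by linarith) (by linarith)
  have hβ0 : 0 < β := by positivity
  have hb : 0 ≤ b := nonneg_of_mul_nonneg_left
    ((abs_nonneg _).trans (hbound β ⟨hβ0.le, le_rfl⟩)) hβ0
  have ha : 0 ≤ a := by nlinarith
  -- on `(0, α]` the chord bound `sin u ≥ (sin α / α) u` beats the error `b u`
  have hpos : ∀ u, 0 < u → u ≤ α → 0 < D u := by
    intro u hu huα
    have hα0 : 0 < α := hu.trans_le huα
    have hsin := mul_le_mul_of_nonneg_left (sin_div_mul_le_sin (by linarith) hu.le huα) ha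
    have hbα : b * α < a * sin α := by rw [hα, sin_pi_sub]; nlinarith
    have hbu : b * u < a * (sin α / α * u) := by
      calc b * u = b * α * (u / α) := by field_simp
        _ < a * sin α * (u / α) := by gcongr
        _ = a * (sin α / α * u) := by ring
    linarith [(abs_le.1 (hbound u ⟨hu.le, by linarith⟩)).1]
  have hDβ : D β < 0 := by
    have h := (abs_le.1 (hbound β ⟨hβ0.le, le_rfl⟩)).2
    rw [sin_add, sin_pi, cos_pi] at h
    linarith
  obtain ⟨τ, hτ, hDτ, hτpos⟩ := hD.continuousOn.exists_first_zero (by linarith)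
    (hpos α (by linarith) le_rfl) hDβ.le
  refine ⟨τ, abs_sub_lt_iff.2 ⟨by linarith [hτ.2], by linarith [hτ.1]⟩, hDτ, fun u hu huτ => ?_⟩
  rcases le_or_gt u α with huα | hαu
  · exact hpos u hu huα
  · exact hτpos u ⟨hαu.le, huτ⟩

theorem tau_tends_to_pi_along_L (l : ℝ) (hl : 0 < l)
    (y z : ℝ → ℝ → ℝ)
    (hsys : ∀ r : ℝ, 0 < r →
      WenteSystem ((l - 2) * r) (y r) (z r) ∧
      y r 0 = 0 ∧ z r 0 = 0 ∧
      deriv (y r) 0 = (1 + r) * Real.sqrt (l * r) ∧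
      deriv (z r) 0 = r * Real.sqrt (l * r + 1)) :
    ∀ ϵ : ℝ, 0 < ϵ → ϵ < Real.pi →
      ∃ r₀ : ℝ, 0 < r₀ ∧ ∀ r : ℝ, 0 < r → r < r₀ →
        ∃ τ : ℝ, |τ - Real.pi| < ϵ ∧ y r τ = z r τ ∧
          ∀ u : ℝ, 0 < u → u < τ → z r u < y r u := by
  intro ϵ hϵ hϵπ
  obtain ⟨C, hC⟩ := wente_sub_sqrt_mul_sin_le hl.le
  have hsmall : ∀ᶠ r in 𝓝[>] 0, C * √r * (π + ϵ / 2) < √l * sin (ϵ / 2) := by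
    have hσ : 0 < sin (ϵ / 2) := sin_pos_of_pos_of_lt_pi (by linarith) (by linarith)
    have h : Tendsto (fun r => C * √r * (π + ϵ / 2)) (𝓝[>] 0) (𝓝 0) := by
      simpa using ((tendsto_const_nhds (x := C)).mul (continuous_sqrt.tendsto 0)).mul_const
        (π + ϵ / 2) |>.mono_left nhdsWithin_le_nhds
    exact h.eventually (gt_mem_nhds (mul_pos (sqrt_pos.2 hl) hσ))
  obtain ⟨r₀, hr₀, hsub⟩ := mem_nhdsGT_iff_exists_Ioo_subset.1 (hC.and hsmall)
  refine ⟨r₀, hr₀, fun r hr hrr₀ => ?_⟩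
  obtain ⟨hest, hrsmall⟩ := hsub ⟨hr, hrr₀⟩
  obtain ⟨hs, hy0, hz0, hy'0, hz'0⟩ := hsys r hr
  have hD : Continuous fun u => y r u - z r u :=
    continuous_iff_continuousAt.2 fun u => ((hs.1 u).sub (hs.2.2.1 u)).continuousAt
  have hb : C * r * (π + ϵ / 2) < √(l * r) * sin (ϵ / 2) := by
    calc C * r * (π + ϵ / 2) = √r * (C * √r * (π + ϵ / 2)) := by
          linear_combination (-(C * (π + ϵ / 2))) * mul_self_sqrt hr.le
      _ < √r * (√l * sin (ϵ / 2)) := mul_lt_mul_of_pos_left hrsmall (sqrt_pos.2 hr)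
      _ = √(l * r) * sin (ϵ / 2) := by rw [sqrt_mul hl.le]; ring
  obtain ⟨τ, hτ, hτ0, hpos⟩ := exists_first_zero_near_pi hD hϵ hϵπ
    (fun u hu => hest _ _ hs hy0 hz0 hy'0 hz'0 u ⟨hu.1, hu.2.trans (by linarith)⟩) hb
  exact ⟨τ, hτ, sub_eq_zero.1 hτ0, fun u hu huτ => sub_pos.1 (hpos u hu huτ)⟩
end

section
/- Let H ≥ 0, δ ∈ ℝ, and let I ⊆ ℝ be an interval. Let x : I → ℝ be differentiable with 0 < x(s) < 1 for all s ∈ I and x'(s)² = (x(s)² − x(s)⁴ − (H·x(s)² − δ)²)/x(s)² for all s ∈ I, and let φ : I → ℝ be differentiable with φ'(s) = (δ − H·x(s)²)/(x(s)·(1 − x(s)²)) for all s ∈ I. Define ψ : I × ℝ → ℝ⁴ by ψ(s,θ) = (x(s)·cos θ, −x(s)·sin θ, √(1 − x(s)²)·sin(φ(s)), √(1 − x(s)²)·cos(φ(s))). Then for every (s,θ) ∈ I × ℝ, the Euclidean norm of ∂ψ/∂s(s,θ) equals 1. -/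
open Real Set

theorem rotational_profile_unit_speed (H δ : ℝ) (hH : 0 ≤ H)
    (I : Set ℝ) (hI : I.OrdConnected)
    (x φ x' φ' : ℝ → ℝ)
    (hx : ∀ s ∈ I, HasDerivWithinAt x (x' s) I s)
    (hφ : ∀ s ∈ I, HasDerivWithinAt φ (φ' s) I s)
    (hxrange : ∀ s ∈ I, 0 < x s ∧ x s < 1)
    (hxode : ∀ s ∈ I,
      (x' s) ^ 2 = ((x s) ^ 2 - (x s) ^ 4 - (H * (x s) ^ 2 - δ) ^ 2) / (x s) ^ 2)
    (hφode : ∀ s ∈ I, φ' s = (δ - H * (x s) ^ 2) / (x s * (1 - (x s) ^ 2)))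
    (ψ : ℝ → ℝ → EuclideanSpace ℝ (Fin 4))
    (hψ : ∀ s θ : ℝ, ψ s θ = (WithLp.equiv 2 (Fin 4 → ℝ)).symm
      ![x s * Real.cos θ, -(x s * Real.sin θ),
        Real.sqrt (1 - (x s) ^ 2) * Real.sin (φ s),
        Real.sqrt (1 - (x s) ^ 2) * Real.cos (φ s)]) :
    ∀ s ∈ I, ∀ θ : ℝ, ∃ d : EuclideanSpace ℝ (Fin 4),
      HasDerivWithinAt (fun t => ψ t θ) d I s ∧ ‖d‖ = 1 := by
  intro s hs θ
  obtain ⟨hx0, hx1⟩ := hxrange s hs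
  have hA : (0:ℝ) < 1 - x s ^ 2 := by nlinarith
  have hAne : 1 - x s ^ 2 ≠ 0 := ne_of_gt hA
  have hg : Real.sqrt (1 - x s ^ 2) ≠ 0 := by positivity
  have hgsq : Real.sqrt (1 - x s ^ 2) ^ 2 = 1 - x s ^ 2 := Real.sq_sqrt hA.le
  set g' : ℝ := (0 - 2 * x s ^ 1 * x' s) / (2 * Real.sqrt (1 - x s ^ 2)) with hg'
  -- derivative of sqrt (1 - x^2)
  have hsub : HasDerivWithinAt (fun t => 1 - x t ^ 2) (0 - 2 * x s ^ 1 * x' s) I s :=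
    (hasDerivWithinAt_const s I (1:ℝ)).sub ((hx s hs).pow 2)
  have hsqrt : HasDerivWithinAt (fun t => Real.sqrt (1 - x t ^ 2)) g' I s :=
    hsub.sqrt hAne
  set V : ℝ → (Fin 4 → ℝ) := fun t =>
      ![x t * Real.cos θ, -(x t * Real.sin θ),
        Real.sqrt (1 - x t ^ 2) * Real.sin (φ t),
        Real.sqrt (1 - x t ^ 2) * Real.cos (φ t)] with hV
  set dv : Fin 4 → ℝ :=
      ![x' s * Real.cos θ, -(x' s * Real.sin θ),
        g' * Real.sin (φ s) + Real.sqrt (1 - x s ^ 2) * (Real.cos (φ s) * φ' s),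
        g' * Real.cos (φ s) + Real.sqrt (1 - x s ^ 2) * (-Real.sin (φ s) * φ' s)] with hdv
  have hVd : HasDerivWithinAt V dv I s := by
    rw [hasDerivWithinAt_pi]
    intro i
    fin_cases i
    · exact (hx s hs).mul_const _
    · exact ((hx s hs).mul_const _).neg
    · exact hsqrt.mul ((hφ s hs).sin)
    · exact hsqrt.mul ((hφ s hs).cos)
  refine ⟨(WithLp.equiv 2 (Fin 4 → ℝ)).symm dv, ?_, ?_⟩
  · have : HasDerivWithinAt (fun t => (WithLp.equiv 2 (Fin 4 → ℝ)).symm (V t))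
        ((WithLp.equiv 2 (Fin 4 → ℝ)).symm dv) I s := by
      have := ((PiLp.continuousLinearEquiv 2 ℝ (fun _ : Fin 4 => ℝ)).symm.toContinuousLinearMap.hasFDerivAt
        (x := V s)).comp_hasDerivWithinAt s hVd
      exact this
    exact this.congr (fun t _ => hψ t θ) (hψ s θ)
  · have hnorm : ‖(WithLp.equiv 2 (Fin 4 → ℝ)).symm dv‖
        = Real.sqrt (∑ i : Fin 4, (dv i) ^ 2) := by
      rw [EuclideanSpace.norm_eq]
      congr 1
      refine Finset.sum_congr rfl fun i _ => ?_
      rw [Real.norm_eq_abs, sq_abs]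
      rfl
    rw [hnorm, Fin.sum_univ_four]
    have hsum : (dv 0) ^ 2 + (dv 1) ^ 2 + (dv 2) ^ 2 + (dv 3) ^ 2 = 1 := by
      have h0 : dv 0 = x' s * Real.cos θ := rfl
      have h1 : dv 1 = -(x' s * Real.sin θ) := rfl
      have h2 : dv 2 = g' * Real.sin (φ s)
          + Real.sqrt (1 - x s ^ 2) * (Real.cos (φ s) * φ' s) := rfl
      have h3 : dv 3 = g' * Real.cos (φ s)
          + Real.sqrt (1 - x s ^ 2) * (-Real.sin (φ s) * φ' s) := rfl
      have hodex := hxode s hs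
      have hxne : x s ≠ 0 := ne_of_gt hx0
      have hx2ne : x s ^ 2 ≠ 0 := pow_ne_zero 2 hxne
      have hx'sq : x' s ^ 2 * x s ^ 2 = x s ^ 2 - x s ^ 4 - (H * x s ^ 2 - δ) ^ 2 := by
        rw [hodex]; field_simp
      have hφ'v : φ' s * (x s * (1 - x s ^ 2)) = δ - H * x s ^ 2 := by
        rw [hφode s hs]; field_simp
      have hφ'sq : φ' s ^ 2 * (x s ^ 2 * (1 - x s ^ 2) ^ 2) = (δ - H * x s ^ 2) ^ 2 := by
        linear_combination (φ' s * (x s * (1 - x s ^ 2)) + (δ - H * x s ^ 2)) * hφ'v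
      have htrig1 : Real.sin θ ^ 2 + Real.cos θ ^ 2 = 1 := Real.sin_sq_add_cos_sq θ
      have htrig2 : Real.sin (φ s) ^ 2 + Real.cos (φ s) ^ 2 = 1 := Real.sin_sq_add_cos_sq (φ s)
      have h01 : (dv 0) ^ 2 + (dv 1) ^ 2 = x' s ^ 2 := by
        rw [h0, h1]; linear_combination x' s ^ 2 * htrig1
      have hg2 : g' ^ 2 = x s ^ 2 * x' s ^ 2 / (1 - x s ^ 2) := by
        rw [hg', div_pow, mul_pow, hgsq]
        field_simp
        ring
      have h23 : (dv 2) ^ 2 + (dv 3) ^ 2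
          = g' ^ 2 + (1 - x s ^ 2) * φ' s ^ 2 := by
        rw [h2, h3]
        linear_combination (g' ^ 2 + Real.sqrt (1 - x s ^ 2) ^ 2 * φ' s ^ 2) * htrig2
          + φ' s ^ 2 * hgsq
      have key : x' s ^ 2 * x s ^ 2 + x s ^ 2 * (1 - x s ^ 2) ^ 2 * φ' s ^ 2
          = x s ^ 2 * (1 - x s ^ 2) := by
        linear_combination hx'sq + hφ'sq
      have key2 : x' s ^ 2 + (1 - x s ^ 2) ^ 2 * φ' s ^ 2 = 1 - x s ^ 2 := by
        apply mul_left_cancel₀ hx2ne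
        linear_combination key
      have hfin : g' ^ 2 + (1 - x s ^ 2) * φ' s ^ 2 = 1 - x' s ^ 2 := by
        rw [hg2]
        field_simp
        linear_combination key2
      linarith [h01, h23, hfin]
    rw [hsum, Real.sqrt_one]
end

section
/- Let δ > 0 and x_m > 0 with x_m² + x_m⁴ = δ². Let x : [0,∞) → ℝ be continuously differentiable with x(0) = x_m, x'(s) > 0 for all s > 0, and x'(s)² = (x(s)² + x(s)⁴ − δ²)/x(s)² for all s ≥ 0. Define φ(s) = ∫ from 0 to s of δ/(x(t)·(x(t)² + 1)) dt, x₃(s) = √(x(s)² + 1)·sinh(φ(s)), and F(s) = x₃(s)·x'(s) − x₃'(s)·x(s). Then there exists s̃ > 0 such that F(s̃) = 0 and F(s) < 0 for all s ∈ [0, s̃). -/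
/-! Put `G = x' sinh φ - δ cosh φ`. Differentiating `x₃` gives `F = G / √(x² + 1)`, so `F` and
`G` have the same sign, and `G`, unlike `x₃'`, is known to be continuous; `G 0 = -δ < 0`. Because
`δ² = x_m² + x_m⁴`, the ODE gives `x' ≥ x - x_m`, so `x` grows at least linearly and `x' → ∞`;
since `φ` increases, `sinh φ ≥ tanh (φ 1) · cosh φ` on `[1, ∞)`, so `G` eventually becomes
nonnegative. The least zero of `G` is `s̃`. -/

open Real Set Filter MeasureTheory intervalIntegral

theorem strictMonoOn_Ici_of_hasDerivWithinAt_pos {f f' : ℝ → ℝ} {a : ℝ}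
    (hf : ∀ s ∈ Ici a, HasDerivWithinAt f (f' s) (Ici a) s) (hf' : ∀ s, a < s → 0 < f' s) :
    StrictMonoOn f (Ici a) :=
  strictMonoOn_of_hasDerivWithinAt_pos (convex_Ici a) (fun s hs => (hf s hs).continuousWithinAt)
    (fun s hs => by
      rw [interior_Ici] at hs ⊢
      exact (hf s (Ioi_subset_Ici_self hs)).mono Ioi_subset_Ici_self)
    (fun s hs => hf' s (by rwa [interior_Ici] at hs))

theorem tendsto_atTop_of_hasDerivWithinAt_gt {f f' : ℝ → ℝ} {a d : ℝ}
    (hf : ∀ s ∈ Ici a, HasDerivWithinAt f (f' s) (Ici a) s) (hd : 0 < d)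
    (hf' : ∀ s, a < s → d < f' s) : Tendsto f atTop atTop := by
  have hmono : StrictMonoOn (fun s => f s - d * s) (Ici a) :=
    strictMonoOn_Ici_of_hasDerivWithinAt_pos
      (fun s hs => by simpa using (hf s hs).fun_sub ((hasDerivWithinAt_id s _).const_mul d))
      (fun s hs => sub_pos.2 (hf' s hs))
  refine tendsto_atTop_mono' _ ?_
    (tendsto_atTop_add_const_left _ (f a - d * a) (tendsto_id.const_mul_atTop hd))
  filter_upwards [eventually_ge_atTop a] with s hs
  have := hmono.monotoneOn self_mem_Ici hs hs
  simp only [id] at this ⊢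
  linarith

theorem hasDerivWithinAt_integral_Ici {g : ℝ → ℝ} {a s : ℝ} (hg : ContinuousOn g (Ici a))
    (hs : s ∈ Ici a) : HasDerivWithinAt (fun u => ∫ t in a..u, g t) (g s) (Ici a) s := by
  have : Fact (s ∈ Icc a (s + 1)) := ⟨⟨hs, by linarith⟩⟩
  have hg' : ContinuousOn g (Icc a (s + 1)) := hg.mono Icc_subset_Ici_self
  have hint : IntervalIntegrable g volume a s :=
    (hg'.mono (by rw [uIcc_of_le hs]; exact Icc_subset_Icc_right (by linarith))).intervalIntegrable
  have h : HasDerivWithinAt (fun u => ∫ t in a..u, g t) (g s) (Icc a (s + 1)) s :=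
    integral_hasDerivWithinAt_right hint
      (hg'.stronglyMeasurableAtFilter_nhdsWithin measurableSet_Icc s) (hg' s this.out)
  exact h.mono_of_mem_nhdsWithin (inter_mem_nhdsWithin (Ici a) (Iic_mem_nhds (lt_add_one s)))

theorem exists_first_zero_of_continuousOn {f : ℝ → ℝ} {a b : ℝ} (hab : a ≤ b)
    (hf : ContinuousOn f (Icc a b)) (ha : f a < 0) (hb : 0 ≤ f b) :
    ∃ c ∈ Ioc a b, f c = 0 ∧ ∀ s ∈ Ico a c, f s < 0 := by
  have hK : IsCompact (Icc a b ∩ f ⁻¹' {0}) := isCompact_Icc.of_isClosed_subset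
    (hf.preimage_isClosed_of_isClosed isClosed_Icc isClosed_singleton) inter_subset_left
  obtain ⟨z, hz, hfz⟩ := intermediate_value_Icc hab hf ⟨ha.le, hb⟩
  obtain ⟨c, ⟨⟨hac, hcb⟩, hfc : f c = 0⟩, hleast⟩ := hK.exists_isLeast ⟨z, hz, hfz⟩
  have hneg : ∀ s ∈ Ico a c, f s < 0 := by
    rintro s ⟨has, hsc⟩
    by_contra! hfs
    have hsb : s ≤ b := hsc.le.trans hcb
    obtain ⟨w, ⟨haw, hws⟩, hfw⟩ :=
      intermediate_value_Icc has (hf.mono (Icc_subset_Icc_right hsb)) ⟨ha.le, hfs⟩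
    linarith [hleast ⟨⟨haw, hws.trans hsb⟩, hfw⟩]
  refine ⟨c, ⟨hac.lt_of_ne ?_, hcb⟩, hfc, hneg⟩
  rintro rfl
  linarith

theorem hasDerivWithinAt_sqrt_sq_add_one_mul_sinh {x φ : ℝ → ℝ} {X' Φ' s : ℝ} {t : Set ℝ}
    (hx : HasDerivWithinAt x X' t s) (hφ : HasDerivWithinAt φ Φ' t s) :
    HasDerivWithinAt (fun u => √(x u ^ 2 + 1) * sinh (φ u))
      (x s * X' / √(x s ^ 2 + 1) * sinh (φ s) + √(x s ^ 2 + 1) * (cosh (φ s) * Φ')) t s := by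
  have hsq : HasDerivWithinAt (fun u => x u ^ 2 + 1) (2 * x s * X') t s := by
    simpa using (hx.pow 2).add_const 1
  have hsqrt := hsq.sqrt (by positivity)
  refine (hsqrt.mul ((hasDerivAt_sinh (φ s)).comp_hasDerivWithinAt s hφ)).congr_deriv ?_
  simp only [Function.comp_apply]
  field_simp

theorem sqrt_mul_sinh_mul_sub_eq {X X' δ p : ℝ} (hX : 0 < X) :
    √(X ^ 2 + 1) * sinh p * X'
        - (X * X' / √(X ^ 2 + 1) * sinh p + √(X ^ 2 + 1) * (cosh p * (δ / (X * (X ^ 2 + 1))))) * X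
      = (X' * sinh p - δ * cosh p) / √(X ^ 2 + 1) := by
  have hS : √(X ^ 2 + 1) ^ 2 = X ^ 2 + 1 := sq_sqrt (by positivity)
  have hS0 : 0 < √(X ^ 2 + 1) := sqrt_pos.2 (by positivity)
  field_simp
  rw [hS]
  ring

theorem catenoid_ode_sub_le {δ x_m X X' : ℝ} (hxm : 0 < x_m) (hroot : x_m ^ 2 + x_m ^ 4 = δ ^ 2)
    (hX : x_m ≤ X) (hX' : 0 < X') (hode : X' ^ 2 = (X ^ 2 + X ^ 4 - δ ^ 2) / X ^ 2) :
    X - x_m ≤ X' := by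
  have hX0 : 0 < X := hxm.trans_le hX
  -- After substituting `δ² = x_m² + x_m⁴`, the difference of the two sides (times `X²`) is
  -- `(X - x_m) * ((X + x_m) * (1 + x_m²) + 2 * x_m * X²)`.
  have hsq : (X - x_m) ^ 2 ≤ X' ^ 2 := by
    rw [hode, ← hroot, le_div_iff₀ (by positivity)]
    nlinarith [mul_nonneg (sub_nonneg.2 hX)
      (by positivity : 0 ≤ (X + x_m) * (1 + x_m ^ 2) + 2 * x_m * X ^ 2)]
  exact abs_le_of_sq_le_sq' hsq hX'.le |>.2

theorem mul_cosh_le_mul_sinh {δ y p q : ℝ} (hδ : 0 ≤ δ) (hp : 0 < p) (hpq : p ≤ q)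
    (hy : δ * cosh p / sinh p ≤ y) : δ * cosh q ≤ y * sinh q := by
  have hsp : 0 < sinh p := sinh_pos_iff.2 hp
  have hsq : 0 < sinh q := sinh_pos_iff.2 (hp.trans_le hpq)
  have hqp : cosh q * sinh p ≤ sinh q * cosh p := by
    have := sinh_nonneg_iff.2 (sub_nonneg.2 hpq)
    rw [sinh_sub] at this
    linarith
  rw [div_le_iff₀ hsp] at hy
  have : δ * cosh q * sinh p ≤ y * sinh q * sinh p := by nlinarith [cosh_pos p]
  exact le_of_mul_le_mul_right this hsp

theorem exists_mul_cosh_le_mul_sinh {δ : ℝ} {y φ : ℝ → ℝ} (hδ : 0 ≤ δ)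
    (hy : Tendsto y atTop atTop) (hφ : StrictMonoOn φ (Ici 0)) (hφ0 : φ 0 = 0) :
    ∃ b, 0 ≤ b ∧ δ * cosh (φ b) ≤ y b * sinh (φ b) := by
  have h1 : (1:ℝ) ∈ Ici 0 := mem_Ici.2 zero_le_one
  have hφ1 : 0 < φ 1 := hφ0 ▸ hφ self_mem_Ici h1 one_pos
  obtain ⟨b, hb1, hb⟩ := ((eventually_ge_atTop 1).and
    (hy.eventually_ge_atTop (δ * cosh (φ 1) / sinh (φ 1)))).exists
  have hb0 : 0 ≤ b := zero_le_one.trans hb1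
  exact ⟨b, hb0, mul_cosh_le_mul_sinh hδ hφ1 (hφ.monotoneOn h1 hb0 hb1) hb⟩

theorem catenoid_ode_tendsto_deriv_atTop {δ x_m : ℝ} {x x' : ℝ → ℝ} (hxm : 0 < x_m)
    (hroot : x_m ^ 2 + x_m ^ 4 = δ ^ 2)
    (hx : ∀ s ∈ Ici (0:ℝ), HasDerivWithinAt x (x' s) (Ici 0) s) (hx0 : x 0 = x_m)
    (hx'pos : ∀ s : ℝ, 0 < s → 0 < x' s)
    (hode : ∀ s ∈ Ici (0:ℝ), (x' s) ^ 2 = ((x s) ^ 2 + (x s) ^ 4 - δ ^ 2) / (x s) ^ 2) :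
    Tendsto x' atTop atTop := by
  have hxmono := strictMonoOn_Ici_of_hasDerivWithinAt_pos hx hx'pos
  have h1 : (1:ℝ) ∈ Ici 0 := mem_Ici.2 zero_le_one
  have hgap : ∀ s, 0 < s → x s - x_m ≤ x' s := fun s hs =>
    catenoid_ode_sub_le hxm hroot (hx0 ▸ hxmono.monotoneOn self_mem_Ici hs.le hs.le) (hx'pos s hs)
      (hode s hs.le)
  have hxtop : Tendsto x atTop atTop := by
    have hIci : Ici (1:ℝ) ⊆ Ici 0 := Ici_subset_Ici.2 zero_le_one
    refine tendsto_atTop_of_hasDerivWithinAt_gt (a := 1) (d := x 1 - x_m)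
      (fun s hs => (hx s (hIci hs)).mono hIci)
      (sub_pos.2 (hx0 ▸ hxmono self_mem_Ici h1 one_pos)) (fun s hs => ?_)
    have := hxmono h1 (hIci (Ioi_subset_Ici_self hs)) hs
    linarith [hgap s (one_pos.trans hs)]
  refine tendsto_atTop_mono' _ ?_ (tendsto_atTop_add_const_right _ (-x_m) hxtop)
  filter_upwards [eventually_gt_atTop 0] with s hs
  linarith [hgap s hs]

theorem hyperbolic_catenoid_free_boundary_parameter (δ x_m : ℝ)
    (hδ : 0 < δ) (hxm : 0 < x_m) (hroot : x_m ^ 2 + x_m ^ 4 = δ ^ 2)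
    (x x' : ℝ → ℝ)
    (hx : ∀ s ∈ Ici (0:ℝ), HasDerivWithinAt x (x' s) (Ici 0) s)
    (hx'cont : ContinuousOn x' (Ici 0))
    (hx0 : x 0 = x_m)
    (hx'pos : ∀ s : ℝ, 0 < s → 0 < x' s)
    (hode : ∀ s ∈ Ici (0:ℝ),
      (x' s) ^ 2 = ((x s) ^ 2 + (x s) ^ 4 - δ ^ 2) / (x s) ^ 2)
    (φ x₃ x₃' F : ℝ → ℝ)
    (hφ : ∀ s : ℝ, φ s = ∫ t in (0:ℝ)..s, δ / (x t * ((x t) ^ 2 + 1)))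
    (hx₃ : ∀ s : ℝ, x₃ s = Real.sqrt ((x s) ^ 2 + 1) * Real.sinh (φ s))
    (hx₃' : ∀ s ∈ Ici (0:ℝ), HasDerivWithinAt x₃ (x₃' s) (Ici 0) s)
    (hF : ∀ s : ℝ, F s = x₃ s * x' s - x₃' s * x s) :
    ∃ stilde : ℝ, 0 < stilde ∧ F stilde = 0 ∧ ∀ s : ℝ, 0 ≤ s → s < stilde → F s < 0 := by
  have hxpos : ∀ s ∈ Ici (0:ℝ), 0 < x s := fun s hs => hxm.trans_le
    (hx0 ▸ (strictMonoOn_Ici_of_hasDerivWithinAt_pos hx hx'pos).monotoneOn self_mem_Ici hs hs)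
  have hxc : ContinuousOn x (Ici 0) := fun s hs => (hx s hs).continuousWithinAt
  have hφ' : ∀ s ∈ Ici (0:ℝ), HasDerivWithinAt φ (δ / (x s * (x s ^ 2 + 1))) (Ici 0) s := by
    rw [funext hφ]
    refine fun s hs => hasDerivWithinAt_integral_Ici ?_ hs
    exact continuousOn_const.div (hxc.mul ((hxc.pow 2).add continuousOn_const))
      fun t ht => (mul_pos (hxpos t ht) (by positivity)).ne'
  have hφc : ContinuousOn φ (Ici 0) := fun s hs => (hφ' s hs).continuousWithinAt
  have hφ0 : φ 0 = 0 := by simp [hφ]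
  set G := fun s => x' s * sinh (φ s) - δ * cosh (φ s)
  have hFG : ∀ s ∈ Ici (0:ℝ), F s = G s / √(x s ^ 2 + 1) := by
    intro s hs
    have hx₃'eq := (uniqueDiffOn_Ici 0 s hs).eq_deriv _ (hx₃' s hs)
      (funext hx₃ ▸ hasDerivWithinAt_sqrt_sq_add_one_mul_sinh (hx s hs) (hφ' s hs))
    rw [hF, hx₃, hx₃'eq, sqrt_mul_sinh_mul_sub_eq (hxpos s hs)]
  obtain ⟨b, hb0, hb⟩ := exists_mul_cosh_le_mul_sinh hδ.le
    (catenoid_ode_tendsto_deriv_atTop hxm hroot hx hx0 hx'pos hode)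
    (strictMonoOn_Ici_of_hasDerivWithinAt_pos hφ' fun s hs => by
      have := hxpos s hs.le; positivity) hφ0
  have hGc : ContinuousOn G (Icc 0 b) :=
    ((hx'cont.mul (continuous_sinh.comp_continuousOn hφc)).sub
      (continuousOn_const.mul (continuous_cosh.comp_continuousOn hφc))).mono Icc_subset_Ici_self
  obtain ⟨stilde, ⟨hs0, -⟩, hGs, hneg⟩ := exists_first_zero_of_continuousOn hb0 hGc
    (by simp [G, hφ0, hδ]) (sub_nonneg.2 hb)
  refine ⟨stilde, hs0, by rw [hFG stilde hs0.le, hGs, zero_div], fun s hs hlt => ?_⟩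
  rw [hFG s hs]
  exact div_neg_of_neg_of_pos (hneg s ⟨hs, hlt⟩) (sqrt_pos.2 (by positivity))
end
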